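/- arXiv:2404.01001 — 7 statements merged into one kernel-verified Lean document; each statement's English description precedes it below -/
import Mathlib

section
/- Let Δ be a quasi-forest with leaf order F_1,...,F_q and let G_i denote a branch of F_i in ⟨F_1,...,F_i⟩. If a subset H belongs to the set A* of intersections F_{i_1} ∩ ... ∩ F_{i_j} (j ≥ 2, i_1 < ... < i_j) occurring with multiplicity 1 in the multiset A of all such intersections, then H = G_i ∩ F_i for some 1 < i ≤ q. -/
/-!
Let `T` be the unique index set of size at least two with `H = ⋂_{j ∈ T} F_j`, and let
`i = max T`. The branch `G_i` is some `F_k` with `k < i`, and it contains `F_j ∩ F_i` for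
every `j < i`. Hence adding `k` to `T`, or removing it when `T` has a third element, leaves
the intersection unchanged; uniqueness of `T` forces `T = {i, k}`.
-/

open Finset

attribute [local instance] Classical.propDecidable

variable {V : Type} [Fintype V] [DecidableEq V]

/-- `F` is a facet (maximal face) of the simplicial complex `Δ`. -/
def IsFacet (Δ : Set (Finset V)) (F : Finset V) : Prop :=
  F ∈ Δ ∧ ∀ s ∈ Δ, F ⊆ s → s = F

/-- The subcomplex `⟨F_1, …, F_i⟩` generated by the facets `F j` for `j ≤ i`. -/
def gen (q : ℕ) (F : Fin q → Finset V) (i : Fin q) : Set (Finset V) :=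
  {s | ∃ j ≤ i, s ⊆ F j}

/-- `B` is a branch of the facet `Fc` in `Δ`: `B` is a facet different from `Fc`
such that `H ∩ Fc ⊆ B ∩ Fc` for every facet `H ≠ Fc`. -/
def IsBranch (Δ : Set (Finset V)) (Fc B : Finset V) : Prop :=
  IsFacet Δ B ∧ B ≠ Fc ∧ ∀ H, IsFacet Δ H → H ≠ Fc → H ∩ Fc ⊆ B ∩ Fc

/-- `Fc` is a leaf of `Δ`: a facet admitting a branch. -/
def IsLeaf (Δ : Set (Finset V)) (Fc : Finset V) : Prop :=
  IsFacet Δ Fc ∧ ∃ B, IsBranch Δ Fc B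

/-- `F : Fin q → Finset V` is a leaf order of `Δ`: an enumeration `F_1, …, F_q` of the
facets of `Δ` such that each `F_i` (`i > 1`) is a leaf of `⟨F_1, …, F_i⟩`. -/
def IsLeafOrder (Δ : Set (Finset V)) (q : ℕ) (F : Fin q → Finset V) : Prop :=
  Function.Injective F ∧ (∀ i, IsFacet Δ (F i)) ∧ (∀ s, IsFacet Δ s → ∃ i, F i = s) ∧
    ∀ i : Fin q, 0 < (i : ℕ) → IsLeaf (gen q F i) (F i)

/-- The multiset `A` of all intersections `F_{i_1} ∩ ⋯ ∩ F_{i_j}` with `j ≥ 2`. -/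
noncomputable def interMultiset (q : ℕ) (F : Fin q → Finset V) : Multiset (Finset V) :=
  (Finset.univ.powerset.filter fun T : Finset (Fin q) => 2 ≤ T.card).val.map
    fun T => T.inf F

section UniqueInf

variable {ι α : Type*} [DecidableEq ι] [SemilatticeInf α] [OrderTop α]

theorem eq_pair_of_unique_inf {f : ι → α} {T : Finset ι} {i k : ι}
    (hunique : ∀ S : Finset ι, 2 ≤ #S → S.inf f = T.inf f → S = T) (hT : 2 ≤ #T)
    (hi : i ∈ T) (hki : k ≠ i) (hk : ∀ j ∈ T, j ≠ i → f j ⊓ f i ≤ f k) :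
    T = {i, k} := by
  have inf_insert_k_eq : ∀ S ⊆ T, i ∈ S → ∀ j ∈ S, j ≠ i → (insert k S).inf f = S.inf f := by
    intro S hST hiS j hjS hji
    rw [inf_insert, inf_eq_right]
    exact (le_inf (inf_le hjS) (inf_le hiS)).trans (hk j (hST hjS) hji)
  obtain ⟨j, hjT, hji⟩ := T.exists_mem_ne (by omega) i
  have hkT : k ∈ T := by
    have hpair : {i, k} ⊆ insert k T := insert_subset (mem_insert_of_mem hi) (by simp)
    have hcard : 2 ≤ #(insert k T) := (card_pair hki.symm).ge.trans (card_le_card hpair)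
    rw [← hunique _ hcard (inf_insert_k_eq T subset_rfl hi j hjT hji)]
    exact mem_insert_self k T
  by_contra hne
  obtain ⟨l, hlT, hl⟩ : ∃ l ∈ T, l ≠ i ∧ l ≠ k := by
    by_contra! h
    refine hne (Subset.antisymm (fun l hl ↦ ?_) (insert_subset hi (singleton_subset_iff.mpr hkT)))
    rcases eq_or_ne l i with rfl | hli
    · exact mem_insert_self l {k}
    · simp [h l hl hli]
  have hiS : i ∈ T.erase k := mem_erase.mpr ⟨hki.symm, hi⟩
  have hlS : l ∈ T.erase k := mem_erase.mpr ⟨hl.2, hlT⟩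
  have hcard : 2 ≤ #(T.erase k) := (card_pair hl.1.symm).ge.trans
    (card_le_card (insert_subset hiS (singleton_subset_iff.mpr hlS)))
  have hinf := inf_insert_k_eq _ (erase_subset k T) hiS l hlS hl.1
  rw [insert_erase hkT] at hinf
  exact notMem_erase k T ((hunique _ hcard hinf.symm).symm ▸ hkT)

end UniqueInf

set_option linter.unusedSectionVars false

section LeafOrder

variable {Δ : Set (Finset V)} {q : ℕ} {F : Fin q → Finset V} {i j l : Fin q}

theorem exists_unique_of_count_interMultiset_eq_one {H : Finset V}
    (hH : (interMultiset q F).count H = 1) :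
    ∃ T : Finset (Fin q), 2 ≤ #T ∧ T.inf F = H ∧
      ∀ S : Finset (Fin q), 2 ≤ #S → S.inf F = H → S = T := by
  rw [interMultiset, Multiset.count_map, ← filter_val, filter_filter] at hH
  obtain ⟨T, hT⟩ := card_eq_one.mp hH
  obtain ⟨hT_mem, hT_unique⟩ := eq_singleton_iff_unique_mem.mp hT
  simp only [mem_filter, mem_powerset, subset_univ, true_and] at hT_mem hT_unique
  exact ⟨T, hT_mem.1, hT_mem.2.symm, fun S hS hSH ↦ hT_unique S ⟨hS, hSH.symm⟩⟩

theorem IsLeafOrder.eq_of_subset (hord : IsLeafOrder Δ q F) (h : F j ⊆ F l) : j = l :=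
  hord.1 ((hord.2.1 j).2 (F l) (hord.2.1 l).1 h).symm

theorem IsLeafOrder.isFacet_gen (hord : IsLeafOrder Δ q F) (hji : j ≤ i) :
    IsFacet (gen q F i) (F j) := by
  refine ⟨⟨j, hji, subset_rfl⟩, ?_⟩
  rintro s ⟨l, -, hsl⟩ hjs
  rw [← hord.eq_of_subset (hjs.trans hsl)] at hsl
  exact Subset.antisymm hsl hjs

theorem IsBranch.exists_lt_eq {B : Finset V} (hB : IsBranch (gen q F i) (F i) B) :
    ∃ k < i, F k = B := by
  obtain ⟨⟨⟨k, hki, hBk⟩, hBfacet⟩, hBi, -⟩ := hB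
  have hkB : F k = B := hBfacet (F k) ⟨k, hki, subset_rfl⟩ hBk
  exact ⟨k, hki.lt_of_ne (by rintro rfl; exact hBi hkB.symm), hkB⟩

theorem IsLeafOrder.inter_subset_branch (hord : IsLeafOrder Δ q F) {B : Finset V}
    (hB : IsBranch (gen q F i) (F i) B) (hji : j < i) : F j ∩ F i ⊆ B :=
  (hB.2.2 (F j) (hord.isFacet_gen hji.le) (hord.1.ne hji.ne)).trans inter_subset_left

end LeafOrder

theorem mem_Astar_eq_branch_inter_general (Δ : Set (Finset V)) (q : ℕ) (F : Fin q → Finset V)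
    (hord : IsLeafOrder Δ q F)
    (G : Fin q → Finset V) (hG : ∀ i : Fin q, 0 < (i : ℕ) → IsBranch (gen q F i) (F i) (G i))
    (H : Finset V) (hH : (interMultiset q F).count H = 1) :
    ∃ i : Fin q, 0 < (i : ℕ) ∧ H = G i ∩ F i := by
  obtain ⟨T, hT, rfl, hunique⟩ := exists_unique_of_count_interMultiset_eq_one hH
  have hTne : T.Nonempty := card_pos.mp (by omega)
  set i := T.max' hTne
  obtain ⟨j, hjT, hji⟩ := T.exists_mem_ne (by omega) i
  have hi : 0 < (i : ℕ) := Nat.zero_lt_of_lt ((T.le_max' j hjT).lt_of_ne hji)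
  obtain ⟨k, hki, hk⟩ := (hG i hi).exists_lt_eq
  have hTik : T = {i, k} := eq_pair_of_unique_inf hunique hT (T.max'_mem hTne) hki.ne
    fun j hjT hji ↦ hk ▸ hord.inter_subset_branch (hG i hi) ((T.le_max' j hjT).lt_of_ne hji)
  refine ⟨i, hi, ?_⟩
  rw [hTik, inf_insert, inf_singleton, hk, inf_eq_inter, inter_comm]

/-- If `H` belongs to the set `A*` of intersections of at least two of the `F_i`
occurring with multiplicity one, then `H = G_i ∩ F_i` for some `i > 1`, where `G_i`
is a branch of `F_i` in `⟨F_1, …, F_i⟩`. -/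
theorem mem_Astar_eq_branch_inter (Δ : Set (Finset V)) (q : ℕ) (F : Fin q → Finset V)
    (hΔ : ∀ s ∈ Δ, ∀ t ⊆ s, t ∈ Δ) (hord : IsLeafOrder Δ q F)
    (G : Fin q → Finset V) (hG : ∀ i : Fin q, 0 < (i : ℕ) → IsBranch (gen q F i) (F i) (G i))
    (H : Finset V) (hH : (interMultiset q F).count H = 1) :
    ∃ i : Fin q, 0 < (i : ℕ) ∧ H = G i ∩ F i :=
  mem_Astar_eq_branch_inter_general Δ q F hord G hG H hH
end

section
/- With the notation of the previous lemma, A* = {G_i ∩ F_i : 1 < i ≤ q} if and only if (i) each F_i (i > 1) has a unique branch G_i in ⟨F_1,...,F_i⟩, and (ii) G_i ∩ F_i is not contained in G_j ∩ F_j for i ≠ j. -/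
open Finset

attribute [local instance] Classical.propDecidable

variable {V : Type} [Fintype V] [DecidableEq V]

/-- A nodup multiset containing `a` whose every element equals `a` is `{a}`. -/
lemma multiset_eq_singleton_of_nodup {α : Type*} {s : Multiset α} (hn : s.Nodup) {a : α}
    (ha : a ∈ s) (hu : ∀ b ∈ s, b = a) : s = {a} := by
  classical
  apply le_antisymm
  · rw [Multiset.le_iff_count]
    intro x
    by_cases hx : x = a
    · subst hx
      simpa using Multiset.nodup_iff_count_le_one.mp hn x
    · have hxs : x ∉ s := fun h => hx (hu x h)
      simp [Multiset.count_eq_zero_of_notMem hxs, hx]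
  · exact Multiset.singleton_le.mpr ha

lemma count_map_eq_one_iff {α β : Type*} [DecidableEq β] (s : Finset α) (f : α → β) (b : β) :
    (Multiset.map f s.val).count b = 1 ↔
      ∃ a ∈ s, f a = b ∧ ∀ a' ∈ s, f a' = b → a' = a := by
  classical
  rw [Multiset.count_map]
  constructor
  · intro h
    obtain ⟨a, ha⟩ := Multiset.card_eq_one.mp h
    have ham : a ∈ s.val.filter (fun x => b = f x) := ha ▸ Multiset.mem_singleton_self a
    rw [Multiset.mem_filter] at ham
    refine ⟨a, ham.1, ham.2.symm, ?_⟩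
    intro a' ha' hfa'
    have hm : a' ∈ s.val.filter (fun x => b = f x) :=
      Multiset.mem_filter.mpr ⟨ha', hfa'.symm⟩
    rw [ha] at hm
    exact Multiset.mem_singleton.mp hm
  · rintro ⟨a, ha, hfa, huni⟩
    rw [Multiset.card_eq_one]
    refine ⟨a, multiset_eq_singleton_of_nodup (Multiset.Nodup.filter _ s.nodup) ?_ ?_⟩
    · exact Multiset.mem_filter.mpr ⟨ha, hfa.symm⟩
    · intro b' hb'
      rw [Multiset.mem_filter] at hb'
      exact huni b' hb'.1 hb'.2.symm

lemma count_one_iff (q : ℕ) (F : Fin q → Finset V) (H : Finset V) :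
    (interMultiset q F).count H = 1 ↔
      ∃ T : Finset (Fin q), (2 ≤ T.card ∧ T.inf F = H) ∧
        ∀ T' : Finset (Fin q), 2 ≤ T'.card → T'.inf F = H → T' = T := by
  unfold interMultiset
  rw [count_map_eq_one_iff]
  constructor
  · rintro ⟨T, hTmem, hinf, huni⟩
    simp only [Finset.mem_filter, Finset.mem_powerset] at hTmem
    refine ⟨T, ⟨hTmem.2, hinf⟩, fun T' h2 hi => huni T' ?_ hi⟩
    simp only [Finset.mem_filter, Finset.mem_powerset]
    exact ⟨Finset.subset_univ _, h2⟩
  · rintro ⟨T, ⟨h2, hinf⟩, huni⟩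
    refine ⟨T, ?_, hinf, fun T' hT' hi => huni T' ?_ hi⟩
    · simp only [Finset.mem_filter, Finset.mem_powerset]
      exact ⟨Finset.subset_univ _, h2⟩
    · simp only [Finset.mem_filter, Finset.mem_powerset] at hT'
      exact hT'.2

lemma facet_gen_iff {Δ : Set (Finset V)} {q : ℕ} {F : Fin q → Finset V}
    (hΔ : ∀ s ∈ Δ, ∀ t ⊆ s, t ∈ Δ) (hfac : ∀ i, IsFacet Δ (F i)) (i : Fin q) (B : Finset V) :
    IsFacet (gen q F i) B ↔ ∃ j, j ≤ i ∧ B = F j := by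
  constructor
  · rintro ⟨⟨j, hj, hBj⟩, hmax⟩
    exact ⟨j, hj, (hmax (F j) ⟨j, hj, subset_rfl⟩ hBj).symm⟩
  · rintro ⟨j, hj, rfl⟩
    refine ⟨⟨j, hj, subset_rfl⟩, ?_⟩
    rintro s ⟨k, hk, hsk⟩ hjs
    exact (hfac j).2 s (hΔ (F k) (hfac k).1 s hsk) hjs

/-- `A* = {G_i ∩ F_i : 1 < i ≤ q}` if and only if (i) each `F_i` (`i > 1`) has a unique
branch `G_i` in `⟨F_1, …, F_i⟩`, and (ii) `G_i ∩ F_i ⊄ G_j ∩ F_j` for `i ≠ j`. -/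
theorem Astar_eq_branch_inters_iff (Δ : Set (Finset V)) (q : ℕ) (F : Fin q → Finset V)
    (hΔ : ∀ s ∈ Δ, ∀ t ⊆ s, t ∈ Δ) (hord : IsLeafOrder Δ q F)
    (G : Fin q → Finset V) (hG : ∀ i : Fin q, 0 < (i : ℕ) → IsBranch (gen q F i) (F i) (G i)) :
    {H | (interMultiset q F).count H = 1}
        = {H | ∃ i : Fin q, 0 < (i : ℕ) ∧ H = G i ∩ F i} ↔
      ((∀ i : Fin q, 0 < (i : ℕ) → ∀ B, IsBranch (gen q F i) (F i) B → B = G i) ∧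
        (∀ i j : Fin q, 0 < (i : ℕ) → 0 < (j : ℕ) → i ≠ j →
          ¬ (G i ∩ F i ⊆ G j ∩ F j))) := by
  obtain ⟨hinj, hfac, hsurj, hleaf⟩ := hord
  have hfacgen : ∀ (i : Fin q) (B : Finset V),
      IsFacet (gen q F i) B ↔ ∃ j, j ≤ i ∧ B = F j := facet_gen_iff hΔ hfac
  -- the branch G i equals F g for some g < i
  have hg : ∀ i : Fin q, 0 < (i : ℕ) → ∃ g : Fin q, g < i ∧ F g = G i := by
    intro i hi
    obtain ⟨g, hgi, hgF⟩ := (hfacgen i (G i)).mp (hG i hi).1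
    refine ⟨g, lt_of_le_of_ne hgi ?_, hgF.symm⟩
    intro h
    exact (hG i hi).2.1 (by rw [hgF, h])
  -- branch property in convenient form
  have hbrsub : ∀ i : Fin q, 0 < (i : ℕ) → ∀ j : Fin q, j ≤ i → j ≠ i →
      F j ∩ F i ⊆ G i ∩ F i := by
    intro i hi j hj hne
    exact (hG i hi).2.2 (F j) ((hfacgen i (F j)).mpr ⟨j, hj, rfl⟩) (fun h => hne (hinj h))
  -- Claim B : any count-one element is some G i ∩ F i (no extra hypotheses needed)
  have keyshape : ∀ H : Finset V, (interMultiset q F).count H = 1 →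
      ∃ i : Fin q, 0 < (i : ℕ) ∧ H = G i ∩ F i := by
    intro H h1
    obtain ⟨T, ⟨hT2, hTinf⟩, huni⟩ := (count_one_iff q F H).mp h1
    have hTne : T.Nonempty := Finset.card_pos.mp (by omega)
    set i := T.max' hTne with hidef
    have hiT : i ∈ T := T.max'_mem hTne
    obtain ⟨t, htT, htne⟩ := Finset.exists_mem_ne (show 1 < T.card by omega) i
    have hti : t < i := lt_of_le_of_ne (T.le_max' t htT) htne
    have hipos : 0 < (i : ℕ) := lt_of_le_of_lt (Nat.zero_le (t : ℕ)) hti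
    obtain ⟨g, hgi, hgF⟩ := hg i hipos
    have hgne : g ≠ i := ne_of_lt hgi
    -- T.inf F ⊆ G i ∩ F i
    have hsub : T.inf F ⊆ G i ∩ F i :=
      subset_trans (Finset.subset_inter (Finset.inf_le htT) (Finset.inf_le hiT))
        (hbrsub i hipos t (T.le_max' t htT) htne)
    have hHg : T.inf F ⊆ F g := by
      rw [hgF]
      exact hsub.trans Finset.inter_subset_left
    -- g must lie in T
    have hgT : g ∈ T := by
      by_contra hgT
      have hins : (insert g T).inf F = H := by
        rw [Finset.inf_insert, inf_eq_right.mpr hHg, hTinf]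
      have heq := huni (insert g T)
        (le_trans hT2 (Finset.card_le_card (Finset.subset_insert g T))) hins
      exact hgT (heq ▸ Finset.mem_insert_self g T)
    -- T must have exactly two elements
    have hcard2 : T.card = 2 := by
      by_contra hc
      have h3 : 3 ≤ T.card := by
        rcases Nat.lt_or_ge T.card 3 with h | h
        · omega
        · exact h
      have hiTg : i ∈ T.erase g := Finset.mem_erase.mpr ⟨(Ne.symm hgne), hiT⟩
      have hne2 : ((T.erase g).erase i).Nonempty := by
        rw [← Finset.card_pos, Finset.card_erase_of_mem hiTg,
          Finset.card_erase_of_mem hgT]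
        omega
      obtain ⟨t', ht'⟩ := hne2
      rw [Finset.mem_erase] at ht'
      obtain ⟨ht'i, ht'2⟩ := ht'
      rw [Finset.mem_erase] at ht'2
      obtain ⟨ht'g, ht'T⟩ := ht'2
      have ht'Tg : t' ∈ T.erase g := Finset.mem_erase.mpr ⟨ht'g, ht'T⟩
      have hsubg : (T.erase g).inf F ⊆ F g := by
        have h1 : (T.erase g).inf F ⊆ F t' ∩ F i :=
          Finset.subset_inter (Finset.inf_le ht'Tg) (Finset.inf_le hiTg)
        have h2 : F t' ∩ F i ⊆ G i ∩ F i := hbrsub i hipos t' (T.le_max' t' ht'T) ht'i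
        rw [← hgF] at h2
        exact h1.trans (h2.trans Finset.inter_subset_left)
      have hTg : (T.erase g).inf F = H := by
        have : T.inf F = F g ⊓ (T.erase g).inf F := by
          rw [← Finset.inf_insert, Finset.insert_erase hgT]
        rw [← hTinf, this, inf_eq_right.mpr hsubg]
      have hcard' : 2 ≤ (T.erase g).card := by
        rw [Finset.card_erase_of_mem hgT]; omega
      have heq := huni (T.erase g) hcard' hTg
      rw [← heq] at hgT
      exact Finset.notMem_erase g T hgT
    have hsubT : ({g, i} : Finset (Fin q)) ⊆ T :=
      Finset.insert_subset_iff.mpr ⟨hgT, Finset.singleton_subset_iff.mpr hiT⟩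
    have hTeq : T = {g, i} :=
      (Finset.eq_of_subset_of_card_le hsubT (by rw [hcard2, Finset.card_pair hgne])).symm
    refine ⟨i, hipos, ?_⟩
    rw [← hTinf, hTeq, Finset.inf_insert, Finset.inf_singleton, hgF, Finset.inf_eq_inter]
  constructor
  · -- A* = {a_i} implies (i) and (ii)
    intro hset
    have hcount1 : ∀ i : Fin q, 0 < (i : ℕ) →
        (interMultiset q F).count (G i ∩ F i) = 1 := by
      intro i hipos
      have hmem : (G i ∩ F i) ∈ {H | ∃ j : Fin q, 0 < (j : ℕ) ∧ H = G j ∩ F j} :=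
        ⟨i, hipos, rfl⟩
      rw [← hset] at hmem
      exact hmem
    constructor
    · -- uniqueness of the branch
      intro i hipos B hB
      by_contra hBne
      obtain ⟨g, hgi, hgF⟩ := hg i hipos
      have hgne : g ≠ i := ne_of_lt hgi
      obtain ⟨T, _, huni⟩ := (count_one_iff q F (G i ∩ F i)).mp (hcount1 i hipos)
      obtain ⟨t, hti, htF⟩ := (hfacgen i B).mp hB.1
      have htnei : t ≠ i := fun h => hB.2.1 (htF.trans (congrArg F h))
      have htneg : t ≠ g := fun h => hBne ((htF.trans (congrArg F h)).trans hgF)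
      -- G i ∩ F i ⊆ F t
      have h2 : G i ∩ F i ⊆ F t ∩ F i := by
        have := hB.2.2 (G i) (hG i hipos).1 (hG i hipos).2.1
        rw [htF] at this
        exact this
      have w1 : ({g, i} : Finset (Fin q)).inf F = G i ∩ F i := by
        rw [Finset.inf_insert, Finset.inf_singleton, hgF, Finset.inf_eq_inter]
      have w2 : ({t, g, i} : Finset (Fin q)).inf F = G i ∩ F i := by
        rw [Finset.inf_insert, Finset.inf_insert, Finset.inf_singleton, hgF,
          Finset.inf_eq_inter]
        exact inf_eq_right.mpr (h2.trans Finset.inter_subset_left)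
      have e1 := huni {g, i} (by rw [Finset.card_pair hgne]) w1
      have e2 := huni {t, g, i}
        (le_trans (by rw [Finset.card_pair hgne])
          (Finset.card_le_card (Finset.subset_insert t {g, i}))) w2
      have htmem : t ∈ ({g, i} : Finset (Fin q)) := by
        rw [e1, ← e2]
        exact Finset.mem_insert_self t {g, i}
      rcases Finset.mem_insert.mp htmem with h | h
      · exact htneg h
      · exact htnei (Finset.mem_singleton.mp h)
    · -- incomparability
      intro i j hipos hjpos hij hss
      obtain ⟨gi, hgii, hgiF⟩ := hg i hipos
      obtain ⟨gj, hgjj, hgjF⟩ := hg j hjpos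
      have hgine : gi ≠ i := ne_of_lt hgii
      obtain ⟨T, _, huni⟩ := (count_one_iff q F (G i ∩ F i)).mp (hcount1 i hipos)
      have w1 : ({gi, i} : Finset (Fin q)).inf F = G i ∩ F i := by
        rw [Finset.inf_insert, Finset.inf_singleton, hgiF, Finset.inf_eq_inter]
      have hsj : G i ∩ F i ⊆ F j := hss.trans Finset.inter_subset_right
      have hsgj : G i ∩ F i ⊆ F gj := by
        refine hss.trans ?_
        rw [← hgjF]
        exact Finset.inter_subset_left
      have w2 : (insert gj (insert j ({gi, i} : Finset (Fin q)))).inf F = G i ∩ F i := by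
        rw [Finset.inf_insert, Finset.inf_insert, w1, inf_eq_right.mpr hsj,
          inf_eq_right.mpr hsgj]
      have hsubT2 : ({gi, i} : Finset (Fin q)) ⊆ insert gj (insert j {gi, i}) :=
        (Finset.subset_insert j _).trans (Finset.subset_insert gj _)
      have e1 := huni {gi, i} (by rw [Finset.card_pair hgine]) w1
      have e2 := huni (insert gj (insert j {gi, i}))
        (le_trans (by rw [Finset.card_pair hgine]) (Finset.card_le_card hsubT2)) w2
      have hjmem : j ∈ ({gi, i} : Finset (Fin q)) := by
        rw [e1, ← e2]
        exact Finset.mem_insert_of_mem (Finset.mem_insert_self j {gi, i})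
      have hjgi : j = gi := by
        rcases Finset.mem_insert.mp hjmem with h | h
        · exact h
        · exact absurd (Finset.mem_singleton.mp h) hij.symm
      have hgjmem : gj ∈ ({gi, i} : Finset (Fin q)) := by
        rw [e1, ← e2]
        exact Finset.mem_insert_self gj _
      rcases Finset.mem_insert.mp hgjmem with h | h
      · rw [← hjgi] at h
        exact absurd h (ne_of_lt hgjj)
      · rw [Finset.mem_singleton] at h
        have : gj < i := lt_trans hgjj (hjgi ▸ hgii)
        exact absurd h (ne_of_lt this)
  · -- (i) and (ii) imply A* = {a_i}
    rintro ⟨hu, hinc⟩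
    have step1 : ∀ i : Fin q, 0 < (i : ℕ) →
        (interMultiset q F).count (G i ∩ F i) = 1 := by
      intro i hipos
      obtain ⟨g, hgi, hgF⟩ := hg i hipos
      have hgne : g ≠ i := ne_of_lt hgi
      apply (count_one_iff q F _).mpr
      refine ⟨{g, i}, ⟨by rw [Finset.card_pair hgne],
        by rw [Finset.inf_insert, Finset.inf_singleton, hgF, Finset.inf_eq_inter]⟩, ?_⟩
      intro T' hT2 hTinf
      have hTne : T'.Nonempty := Finset.card_pos.mp (by omega)
      set m := T'.max' hTne with hmdef
      have hmT : m ∈ T' := T'.max'_mem hTne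
      obtain ⟨t, htT, htne⟩ := Finset.exists_mem_ne (show 1 < T'.card by omega) m
      have htm : t < m := lt_of_le_of_ne (T'.le_max' t htT) htne
      have hmpos : 0 < (m : ℕ) := lt_of_le_of_lt (Nat.zero_le (t : ℕ)) htm
      have hsubm : G i ∩ F i ⊆ G m ∩ F m := by
        rw [← hTinf]
        exact subset_trans (Finset.subset_inter (Finset.inf_le htT) (Finset.inf_le hmT))
          (hbrsub m hmpos t (T'.le_max' t htT) htne)
      have hmi : m = i := by
        by_contra hmi
        exact hinc i m hipos hmpos (fun h => hmi h.symm) hsubm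
      have hiT' : i ∈ T' := hmi ▸ hmT
      -- every element of T' other than i equals g
      have helt : ∀ s ∈ T', s ≠ i → s = g := by
        intro s hs hsne
        have hsle : s ≤ i := hmi ▸ T'.le_max' s hs
        have heq : F s ∩ F i = G i ∩ F i := by
          apply subset_antisymm (hbrsub i hipos s hsle hsne)
          rw [← hTinf]
          exact Finset.subset_inter (Finset.inf_le hs) (Finset.inf_le hiT')
        have hbranch : IsBranch (gen q F i) (F i) (F s) := by
          refine ⟨(hfacgen i (F s)).mpr ⟨s, hsle, rfl⟩, fun h => hsne (hinj h), ?_⟩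
          intro Hf hHf hHne
          obtain ⟨k, hk, rfl⟩ := (hfacgen i Hf).mp hHf
          rw [heq]
          exact hbrsub i hipos k hk (fun h => hHne (congrArg F h))
        have hFsG : F s = G i := hu i hipos (F s) hbranch
        exact hinj (hFsG.trans hgF.symm)
      have hsub' : T' ⊆ {g, i} := by
        intro s hs
        rcases eq_or_ne s i with h | h
        · exact Finset.mem_insert_of_mem (Finset.mem_singleton.mpr h)
        · exact Finset.mem_insert.mpr (Or.inl (helt s hs h))
      exact Finset.eq_of_subset_of_card_le hsub'
        (by rw [Finset.card_pair hgne]; exact hT2)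
    ext H
    simp only [Set.mem_setOf_eq]
    constructor
    · exact keyshape H
    · rintro ⟨i, hipos, rfl⟩
      exact step1 i hipos
end

section
/- If the vertex cover ideal J(G) of a finite simple graph G without isolated vertices is minimally generated by exactly two monomials, then G is a complete bipartite graph. -/
/-!
For a monomial ideal `I` generated by an antichain of monomials `x^a`, the coefficient functional
`p ↦ coeff a p` on `I` satisfies `coeff a (q * p) = q(0) * coeff a p`, so it only sees `I` modulo
the variables. Mapping `I` to the coefficient vectors at the generators sends any generating set onto
a spanning set of `K^A`; hence `J(G)` needs at least as many generators as `G` has minimal vertex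
covers. Two generators and a non-principal `J(G)` leave exactly two minimal covers `W₀ ≠ W₁`.
Every vertex misses some minimal cover (the complement of `{v}` is a cover), so `W₀ ∩ W₁ = ∅`, and
a vertex with a neighbour `w` lies in a minimal cover missing `w`, so `W₀ ∪ W₁ = V`. Edges cross
because `W₀` and `W₁ = W₀ᶜ` are covers, and two non-adjacent vertices both miss one minimal cover,
so they lie on the same side.
-/

open Finset MvPolynomial

variable {V : Type} [Fintype V] [DecidableEq V]

/-- `W` is a vertex cover of `G`: every edge meets `W`. -/
def isVertexCover (G : SimpleGraph V) (W : Finset V) : Prop :=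
  ∀ v w, G.Adj v w → v ∈ W ∨ w ∈ W

/-- `W` is a minimal vertex cover of `G`. -/
def isMinVertexCover (G : SimpleGraph V) (W : Finset V) : Prop :=
  isVertexCover G W ∧ ∀ W' ⊆ W, isVertexCover G W' → W' = W

/-- The vertex cover ideal `J(G)`, generated by the squarefree monomials `x_W`
for `W` a minimal vertex cover of `G`. -/
noncomputable def coverIdeal (K : Type) [Field K] (G : SimpleGraph V) :
    Ideal (MvPolynomial V K) :=
  Ideal.span {p | ∃ W : Finset V, isMinVertexCover G W ∧ p = ∏ i ∈ W, X i}

/-- `G` is a complete bipartite graph: the vertices split into two nonempty parts with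
all edges between the parts and none within. -/
def IsCompleteBipartite (G : SimpleGraph V) : Prop :=
  ∃ W : Finset V, W ≠ ∅ ∧ Wᶜ ≠ ∅ ∧
    ∀ v w, G.Adj v w ↔ ((v ∈ W ∧ w ∉ W) ∨ (v ∉ W ∧ w ∈ W))

theorem Finsupp.indicator_one_le_indicator_one_iff {σ : Type*} {W W' : Finset σ} :
    (indicator W fun _ _ ↦ (1 : ℕ)) ≤ indicator W' (fun _ _ ↦ 1) ↔ W ⊆ W' := by
  classical
  refine ⟨fun h v hv ↦ ?_, fun h v ↦ ?_⟩
  · by_contra hv'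
    simpa [indicator_apply, hv, hv'] using h v
  · by_cases hv : v ∈ W
    · simp [indicator_apply, hv, h hv]
    · simp [indicator_apply, hv]

namespace MvPolynomial

variable {σ R : Type*} [CommSemiring R]

theorem prod_X_eq_monomial_indicator (W : Finset σ) :
    (∏ i ∈ W, X i : MvPolynomial σ R) = monomial (Finsupp.indicator W fun _ _ ↦ 1) 1 := by
  simpa using prod_X_pow (R := R) (fun _ ↦ 1) W

theorem coeff_mul_eq_constantCoeff_mul_coeff {A : Set (σ →₀ ℕ)} {a : σ →₀ ℕ}
    (ha : ∀ b ∈ A, b ≤ a → b = a) {p : MvPolynomial σ R}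
    (hp : p ∈ Ideal.span ((monomial · 1) '' A)) (q : MvPolynomial σ R) :
    coeff a (q * p) = constantCoeff q * coeff a p := by
  classical
  induction hp using Submodule.span_induction generalizing q with
  | mem x hx =>
    obtain ⟨b, hb, rfl⟩ := hx
    rw [coeff_mul_monomial']
    by_cases hba : b ≤ a
    · obtain rfl := ha b hb hba
      simp [constantCoeff_eq, coeff_monomial]
    · rw [if_neg hba, coeff_monomial, if_neg (fun h ↦ hba h.le), mul_zero]
  | zero => simp
  | add x y _ _ hx hy => rw [mul_add, coeff_add, coeff_add, hx, hy, mul_add]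
  | smul r x _ hx => rw [smul_eq_mul, ← mul_assoc, hx, map_mul, mul_assoc, ← hx]

theorem card_le_card_of_span_monomial_eq_span {K : Type*} [Field K] {B : Set (σ →₀ ℕ)}
    (hB : IsAntichain (· ≤ ·) B) {A : Finset (σ →₀ ℕ)} (hAB : ↑A ⊆ B)
    {s : Finset (MvPolynomial σ K)}
    (hs : Ideal.span ((monomial · (1 : K)) '' B) = Ideal.span (s : Set (MvPolynomial σ K))) :
    #A ≤ #s := by
  classical
  let φ : MvPolynomial σ K →ₗ[K] A → K := LinearMap.pi fun a ↦ lcoeff K a.1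
  have hφ : ∀ p ∈ Ideal.span (s : Set (MvPolynomial σ K)),
      φ p ∈ Submodule.span K (s.image φ) := by
    intro p hp
    induction hp using Submodule.span_induction with
    | mem x hx => exact Submodule.subset_span (mem_image_of_mem φ hx)
    | zero => simp
    | add x y _ _ hx hy => simpa using add_mem hx hy
    | smul q x hx hφx =>
      have hφ_mul : φ (q * x) = constantCoeff q • φ x := by
        ext a
        exact coeff_mul_eq_constantCoeff_mul_coeff (fun b hb ↦ hB.eq hb (hAB a.2)) (hs ▸ hx) q
      rw [smul_eq_mul, hφ_mul]
      exact Submodule.smul_mem _ _ hφx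
  have hspan : Submodule.span K (s.image φ : Set (A → K)) = ⊤ := by
    refine eq_top_iff.2 ((Pi.basisFun K A).span_eq.ge.trans (Submodule.span_le.2 ?_))
    rintro _ ⟨a, rfl⟩
    have hφ_monomial : φ (monomial a.1 1) = Pi.basisFun K A a := by
      ext b
      simp only [φ, LinearMap.pi_apply, lcoeff_apply, coeff_monomial, Pi.basisFun_apply,
        Pi.single_apply, Subtype.ext_iff, eq_comm]
    rw [← hφ_monomial]
    exact hφ _ (hs ▸ Ideal.subset_span ⟨a, hAB a.2, rfl⟩)
  calc #A = Module.finrank K (A → K) := by simp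
    _ = (s.image φ : Set (A → K)).finrank K := by rw [Set.finrank, hspan, finrank_top]
    _ ≤ #(s.image φ) := finrank_span_finset_le_card _
    _ ≤ #s := card_image_le

end MvPolynomial

section VertexCover

variable {α : Type} {K : Type} [Field K] {G : SimpleGraph α}

theorem exists_isMinVertexCover_subset {W : Finset α} (hW : isVertexCover G W) :
    ∃ W' ⊆ W, isMinVertexCover G W' := by
  obtain ⟨W', hW'W, hW', hmin⟩ := exists_minimal_le_of_wellFoundedLT (isVertexCover G) W hW
  exact ⟨W', hW'W, hW', fun U hU hcov ↦ subset_antisymm hU (hmin hcov hU)⟩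

theorem isMinVertexCover.eq_empty {W : Finset α} (hW : isMinVertexCover G W)
    (hempty : isVertexCover G ∅) : W = ∅ :=
  (hW.2 ∅ (empty_subset W) hempty).symm

theorem coverIdeal_eq_span_singleton {W : Finset α} (hW : isMinVertexCover G W)
    (huniq : ∀ W', isMinVertexCover G W' → W' = W) :
    coverIdeal K G = Ideal.span {∏ i ∈ W, X i} := by
  refine congrArg Ideal.span (Set.ext fun p ↦ ⟨?_, fun hp ↦ ⟨W, hW, hp⟩⟩)
  rintro ⟨W', hW', rfl⟩
  rw [huniq W' hW']
  rfl

theorem coverIdeal_eq_span_monomial :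
    coverIdeal K G = Ideal.span ((monomial · (1 : K)) ''
      ((fun W ↦ Finsupp.indicator W fun _ _ ↦ 1) '' {W | isMinVertexCover G W})) := by
  rw [coverIdeal, Set.image_image]
  congr 1
  ext p
  simp [prod_X_eq_monomial_indicator, eq_comm]

theorem card_le_card_of_coverIdeal_eq_span {C : Finset (Finset α)}
    (hC : ∀ W ∈ C, isMinVertexCover G W) {s : Finset (MvPolynomial α K)}
    (hs : coverIdeal K G = Ideal.span s) : #C ≤ #s := by
  classical
  have hantichain : IsAntichain (· ≤ ·)
      ((fun W ↦ Finsupp.indicator W fun _ _ ↦ 1) '' {W | isMinVertexCover G W}) := by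
    rintro _ ⟨W, hW, rfl⟩ _ ⟨W', hW', rfl⟩ hne hle
    rw [hW'.2 W (Finsupp.indicator_one_le_indicator_one_iff.1 hle) hW.1] at hne
    exact hne rfl
  have hinj : Set.InjOn (fun W : Finset α ↦ Finsupp.indicator W fun _ _ ↦ (1 : ℕ)) C :=
    fun W _ W' _ h ↦ subset_antisymm (Finsupp.indicator_one_le_indicator_one_iff.1 h.le)
      (Finsupp.indicator_one_le_indicator_one_iff.1 h.ge)
  rw [← card_image_of_injOn hinj]
  refine card_le_card_of_span_monomial_eq_span hantichain ?_
    (coverIdeal_eq_span_monomial.symm.trans hs)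
  rw [coe_image]
  exact Set.image_mono fun W hW ↦ hC W hW

end VertexCover

section TwoMinVertexCovers

variable {G : SimpleGraph V} {W₀ W₁ : Finset V}

theorem exists_isMinVertexCover_of_not_adj {u v : V} (huv : ¬G.Adj u v) :
    ∃ W, isMinVertexCover G W ∧ u ∉ W ∧ v ∉ W := by
  have hcov : isVertexCover G {u, v}ᶜ := by
    intro x y hxy
    by_contra! h
    simp only [mem_compl, mem_insert, mem_singleton, not_not] at h
    rcases h with ⟨rfl | rfl, rfl | rfl⟩ <;> simp_all [G.adj_comm]
  obtain ⟨W, hW, hmin⟩ := exists_isMinVertexCover_subset hcov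
  exact ⟨W, hmin, fun hu ↦ by simpa using hW hu, fun hv ↦ by simpa using hW hv⟩

theorem eq_compl_of_isMinVertexCover_iff (hG : ∀ v, ∃ w, G.Adj v w)
    (hcov : ∀ W, isMinVertexCover G W ↔ W = W₀ ∨ W = W₁) : W₁ = W₀ᶜ := by
  ext v
  rw [mem_compl]
  constructor
  · intro hv₁ hv₀
    obtain ⟨W, hW, hvW, -⟩ := exists_isMinVertexCover_of_not_adj (G.loopless.irrefl v)
    rcases (hcov W).1 hW with rfl | rfl <;> contradiction
  · intro hv₀
    obtain ⟨w, hvw⟩ := hG v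
    obtain ⟨W, hW, hwW, -⟩ := exists_isMinVertexCover_of_not_adj (G.loopless.irrefl w)
    have hvW : v ∈ W := (hW.1 v w hvw).resolve_right hwW
    rcases (hcov W).1 hW with rfl | rfl
    · contradiction
    · exact hvW

theorem isCompleteBipartite_of_isMinVertexCover_iff (hG : ∀ v, ∃ w, G.Adj v w)
    (hne : W₀ ≠ W₁) (hcov : ∀ W, isMinVertexCover G W ↔ W = W₀ ∨ W = W₁) :
    IsCompleteBipartite G := by
  have hW₀ : isMinVertexCover G W₀ := (hcov W₀).2 (Or.inl rfl)
  have hW₁ : isMinVertexCover G W₁ := (hcov W₁).2 (Or.inr rfl)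
  have hcompl := eq_compl_of_isMinVertexCover_iff hG hcov
  refine ⟨W₀, fun h ↦ hne ?_, fun h ↦ hne ?_, fun u v ↦ ⟨fun huv ↦ ?_, fun h ↦ ?_⟩⟩
  · rw [h, hW₁.eq_empty (h ▸ hW₀.1)]
  · rw [← hcompl] at h
    rw [h, hW₀.eq_empty (h ▸ hW₁.1)]
  · have h₀ := hW₀.1 u v huv
    have h₁ := hW₁.1 u v huv
    rw [hcompl, mem_compl, mem_compl] at h₁
    tauto
  · by_contra huv
    obtain ⟨W, hW, huW, hvW⟩ := exists_isMinVertexCover_of_not_adj huv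
    rcases (hcov W).1 hW with rfl | rfl
    · tauto
    · simp only [hcompl, mem_compl] at huW hvW
      tauto

end TwoMinVertexCovers

/-- If the vertex cover ideal `J(G)` of a graph `G` without isolated vertices is minimally
generated by exactly two monomials, then `G` is a complete bipartite graph. -/
theorem completeBipartite_of_two_generators (K : Type) [Field K] (G : SimpleGraph V)
    (hG : ∀ v, ∃ w, G.Adj v w)
    (hgen : ∃ m₁ m₂ : MvPolynomial V K, m₁ ≠ m₂ ∧
      coverIdeal K G = Ideal.span {m₁, m₂} ∧ ∀ m : MvPolynomial V K,
        coverIdeal K G ≠ Ideal.span {m}) :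
    IsCompleteBipartite G := by
  classical
  obtain ⟨m₁, m₂, -, hspan, hnprin⟩ := hgen
  have hcard : ∀ C : Finset (Finset V), (∀ W ∈ C, isMinVertexCover G W) → #C ≤ 2 :=
    fun C hC ↦ (card_le_card_of_coverIdeal_eq_span hC (s := {m₁, m₂})
      (by rwa [coe_pair])).trans card_le_two
  obtain ⟨W₀, -, hW₀⟩ :=
    exists_isMinVertexCover_subset (G := G) (W := univ) fun v _ _ ↦ Or.inl (mem_univ v)
  obtain ⟨W₁, hW₁, hne⟩ : ∃ W₁, isMinVertexCover G W₁ ∧ W₁ ≠ W₀ := by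
    by_contra! h
    exact hnprin _ (coverIdeal_eq_span_singleton hW₀ h)
  refine isCompleteBipartite_of_isMinVertexCover_iff hG hne.symm fun W ↦
    ⟨fun hW ↦ ?_, by rintro (rfl | rfl) <;> assumption⟩
  by_contra! h
  have h3 := hcard {W₀, W₁, W} (by simp [hW₀, hW₁, hW])
  rw [card_eq_three.2 ⟨W₀, W₁, W, hne.symm, h.1.symm, h.2.symm, rfl⟩] at h3
  omega
end

section
/- Let Δ_{3k} be the clique complex of the complement of the path P_{3k} on [3k]. Then Δ_{3k} has a unique facet of cardinality k, namely F_0 = {2,5,8,...,3k-1}, and every proper subset of F_0 is contained in a facet of Δ_{3k} of cardinality greater than k. -/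
open Finset

attribute [local instance] Classical.propDecidable

/-- `s` is a face of the clique complex `Δ_n = Δ(P_nᶜ)` of the complement of the path
`P_n` on `[n] = {1, …, n}`: a subset of `[n]` whose elements have pairwise differences
at least 2. -/
def isFaceP (n : ℕ) (s : Finset ℕ) : Prop :=
  s ⊆ Finset.Icc 1 n ∧ ∀ i ∈ s, ∀ j ∈ s, i < j → i + 2 ≤ j

/-- `s` is a facet (maximal face) of `Δ_n = Δ(P_nᶜ)`. -/
def isFacetP (n : ℕ) (s : Finset ℕ) : Prop :=
  isFaceP n s ∧ ∀ t, isFaceP n t → s ⊆ t → t = s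

/-!
Facets of `Δ(P_nᶜ)` are the independent sets of `P_n` that dominate it: every vertex of `[n]`
lies within distance one of the facet. Cutting `[3k]` into the blocks `{3i+1, 3i+2, 3i+3}`,
domination puts an element of a facet in every block, so facets have at least `k` elements,
and a facet with exactly `k` has one per block. If that element is `3i+1` in some block, the
vertex `3i+3` can only be dominated by `3i+4`, so the same happens in the next block, up to
the last one, where `3k` is left undominated; symmetrically for `3i+3`. Hence `F₀` is the only
facet of size `k`. If `F ⊂ F₀` misses `3j+2`, then `F ∪ {3j+1, 3j+3}` is a face, and any facet
containing it differs from `F₀`, so it has more than `k` elements.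
-/

variable {n k i : ℕ} {s t F : Finset ℕ}

theorem isFaceP.mono (ht : isFaceP n t) (hst : s ⊆ t) : isFaceP n s :=
  ⟨hst.trans ht.1, fun i hi j hj => ht.2 i (hst hi) j (hst hj)⟩

theorem isFaceP.insert {x : ℕ} (hs : isFaceP n s) (hx : x ∈ Icc 1 n)
    (hfar : ∀ b ∈ s, b + 2 ≤ x ∨ x + 2 ≤ b) : isFaceP n (insert x s) := by
  refine ⟨insert_subset hx hs.1, ?_⟩
  simp only [mem_insert]
  rintro a (rfl | ha) b (rfl | hb) hab
  · omega
  · have := hfar b hb; omega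
  · have := hfar a ha; omega
  · exact hs.2 a ha b hb hab

def DominatesPath (n : ℕ) (F : Finset ℕ) : Prop :=
  ∀ x ∈ Icc 1 n, ∃ b ∈ F, x ≤ b + 1 ∧ b ≤ x + 1

theorem isFacetP_iff : isFacetP n F ↔ isFaceP n F ∧ DominatesPath n F := by
  constructor
  · intro hF
    refine ⟨hF.1, fun x hx => ?_⟩
    by_contra! hfar
    have hxF : x ∈ F := hF.2 _ (hF.1.insert hx fun b hb => by have := hfar b hb; omega)
      (subset_insert x F) ▸ mem_insert_self x F
    have := hfar x hxF
    omega
  · rintro ⟨hface, hdom⟩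
    refine ⟨hface, fun t ht hFt => Subset.antisymm (fun x hx => ?_) hFt⟩
    obtain ⟨b, hb, hxb, hbx⟩ := hdom x (ht.1 hx)
    have hbt := hFt hb
    rcases lt_trichotomy x b with hlt | rfl | hgt
    · have := ht.2 x hx b hbt hlt; omega
    · exact hb
    · have := ht.2 b hbt x hx hgt; omega

theorem isFacetP.dominatesPath (hF : isFacetP n F) : DominatesPath n F :=
  (isFacetP_iff.1 hF).2

theorem exists_isFacetP_superset (hs : isFaceP n s) : ∃ t, isFacetP n t ∧ s ⊆ t := by
  let C := (Icc 1 n).powerset.filter fun t => isFaceP n t ∧ s ⊆ t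
  have hsC : s ∈ C := mem_filter.2 ⟨mem_powerset.2 hs.1, hs, Subset.refl s⟩
  obtain ⟨t, htC, htmax⟩ := C.exists_maximal ⟨s, hsC⟩
  obtain ⟨-, ht, hst⟩ := mem_filter.1 htC
  refine ⟨t, ⟨ht, fun u hu htu => ?_⟩, hst⟩
  have huC : u ∈ C := mem_filter.2 ⟨mem_powerset.2 hu.1, hu, hst.trans htu⟩
  exact Subset.antisymm (htmax huC htu) htu

-- `b ∈ [3k]` lies in the block `{3i+1, 3i+2, 3i+3}` with `i = (b - 1) / 3`.
theorem mapsTo_block (hF : isFaceP (3 * k) F) :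
    Set.MapsTo (fun b => (b - 1) / 3) F (range k) := fun b hb => by
  have := mem_Icc.1 (hF.1 hb)
  simp only [coe_range, Set.mem_Iio]
  omega

theorem DominatesPath.surjOn_block (hdom : DominatesPath (3 * k) F) :
    Set.SurjOn (fun b => (b - 1) / 3) F (range k) := fun i hi => by
  simp only [coe_range, Set.mem_Iio] at hi
  obtain ⟨b, hb, h1, h2⟩ := hdom (3 * i + 2) (mem_Icc.2 ⟨by omega, by omega⟩)
  exact ⟨b, hb, show (b - 1) / 3 = i by omega⟩

theorem isFacetP.le_card (hF : isFacetP (3 * k) F) : k ≤ F.card := by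
  simpa using card_le_card_of_surjOn _ hF.dominatesPath.surjOn_block

theorem isFacetP.injOn_block (hF : isFacetP (3 * k) F) (hcard : F.card ≤ k) :
    Set.InjOn (fun b => (b - 1) / 3) F :=
  injOn_of_surjOn_of_card_le _ (mapsTo_block hF.1) hF.dominatesPath.surjOn_block
    (by simpa using hcard)

theorem DominatesPath.three_mul_succ_add_one_mem (hdom : DominatesPath n F)
    (hinj : Set.InjOn (fun b => (b - 1) / 3) F) (hi : 3 * i + 3 ≤ n) (h : 3 * i + 1 ∈ F) :
    3 * (i + 1) + 1 ∈ F := by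
  obtain ⟨b, hb, h1, h2⟩ := hdom (3 * i + 3) (mem_Icc.2 ⟨by omega, hi⟩)
  by_cases hbi : b ≤ 3 * i + 3
  · have : b = 3 * i + 1 := hinj hb h (by dsimp only; omega)
    omega
  · convert hb using 1
    omega

theorem DominatesPath.three_mul_add_three_mem_of_succ (hdom : DominatesPath n F)
    (hinj : Set.InjOn (fun b => (b - 1) / 3) F) (h : 3 * (i + 1) + 3 ∈ F) (hi : 3 * i + 4 ≤ n) :
    3 * i + 3 ∈ F := by
  obtain ⟨b, hb, h1, h2⟩ := hdom (3 * i + 4) (mem_Icc.2 ⟨by omega, hi⟩)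
  by_cases hbi : 3 * i + 4 ≤ b
  · have : b = 3 * (i + 1) + 3 := hinj hb h (by dsimp only; omega)
    omega
  · convert hb using 1
    omega

theorem isFacetP.three_mul_add_one_notMem (hF : isFacetP (3 * k) F)
    (hinj : Set.InjOn (fun b => (b - 1) / 3) F) : 3 * i + 1 ∉ F := by
  intro h
  have hup : ∀ j, i ≤ j → 3 * j ≤ 3 * k → 3 * j + 1 ∈ F := by
    refine Nat.le_induction (fun _ => h) fun j _ ih hj => ?_
    exact hF.dominatesPath.three_mul_succ_add_one_mem hinj (by omega) (ih (by omega))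
  have hi : i ≤ k := by have := mem_Icc.1 (hF.1.1 h); omega
  have := mem_Icc.1 (hF.1.1 (hup k hi le_rfl))
  omega

theorem isFacetP.three_mul_add_three_notMem (hF : isFacetP (3 * k) F)
    (hinj : Set.InjOn (fun b => (b - 1) / 3) F) : 3 * i + 3 ∉ F := by
  have hdown : ∀ i, 3 * i + 3 ∈ F → 3 ∈ F := by
    intro i
    induction i with
    | zero => exact id
    | succ i ih =>
      intro h
      have := mem_Icc.1 (hF.1.1 h)
      exact ih (hF.dominatesPath.three_mul_add_three_mem_of_succ hinj h (by omega))
  intro h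
  have h3 := hdown i h
  have h3k := mem_Icc.1 (hF.1.1 h3)
  obtain ⟨b, hb, h1, h2⟩ := hF.dominatesPath 1 (mem_Icc.2 ⟨le_rfl, by omega⟩)
  have := mem_Icc.1 (hF.1.1 hb)
  have : b = 3 := hinj hb h3 (by dsimp only; omega)
  omega

theorem card_image_three_mul_add_two : ((range k).image fun i => 3 * i + 2).card = k := by
  rw [card_image_of_injective _ fun a b h => by omega, card_range]

theorem isFacetP.eq_of_card_eq (hF : isFacetP (3 * k) F) (hcard : F.card = k) :
    F = (range k).image fun i => 3 * i + 2 := by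
  have hinj := hF.injOn_block hcard.le
  refine eq_of_subset_of_card_le (fun b hb => ?_) (by rw [card_image_three_mul_add_two, hcard])
  obtain ⟨hb1, hbk⟩ := mem_Icc.1 (hF.1.1 hb)
  have h1 := hF.three_mul_add_one_notMem hinj (i := (b - 1) / 3)
  have h3 := hF.three_mul_add_three_notMem hinj (i := (b - 1) / 3)
  refine mem_image.2 ⟨(b - 1) / 3, mem_range.2 (by omega), ?_⟩
  rcases (by omega : b = 3 * ((b - 1) / 3) + 1 ∨ b = 3 * ((b - 1) / 3) + 2 ∨
    b = 3 * ((b - 1) / 3) + 3) with h | h | h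
  · exact absurd (h ▸ hb) h1
  · exact h.symm
  · exact absurd (h ▸ hb) h3

theorem isFacetP_image_three_mul_add_two :
    isFacetP (3 * k) ((range k).image fun i => 3 * i + 2) := by
  refine isFacetP_iff.2 ⟨⟨?_, ?_⟩, fun x hx => ?_⟩
  · simp only [subset_iff, mem_image, mem_range, mem_Icc]
    rintro _ ⟨i, hi, rfl⟩
    omega
  · simp only [mem_image, mem_range]
    rintro _ ⟨i, -, rfl⟩ _ ⟨j, -, rfl⟩ hij
    omega
  · have := mem_Icc.1 hx
    exact ⟨3 * ((x - 1) / 3) + 2, mem_image.2 ⟨_, mem_range.2 (by omega), rfl⟩,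
      by omega, by omega⟩

theorem isFaceP_insert_insert_of_subset_image {j : ℕ}
    (hF : F ⊆ (range k).image fun i => 3 * i + 2) (hj : j < k) (hjF : 3 * j + 2 ∉ F) :
    isFaceP (3 * k) (insert (3 * j + 1) (insert (3 * j + 3) F)) := by
  have hfar : ∀ b ∈ F, ∀ c, 3 * j + 1 ≤ c → c ≤ 3 * j + 3 →
      b + 2 ≤ c ∨ c + 2 ≤ b := by
    intro b hb c hc1 hc3
    obtain ⟨m, -, rfl⟩ := mem_image.1 (hF hb)
    have : m ≠ j := by rintro rfl; exact hjF hb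
    omega
  have hface : isFaceP (3 * k) F := isFacetP_image_three_mul_add_two.1.mono hF
  refine (hface.insert (mem_Icc.2 ⟨by omega, by omega⟩) fun b hb =>
    hfar b hb (3 * j + 3) (by omega) le_rfl).insert (mem_Icc.2 ⟨by omega, by omega⟩)
    fun b hb => ?_
  rcases mem_insert.1 hb with rfl | hb
  · omega
  · exact hfar b hb _ (by omega) (by omega)

theorem exists_isFacetP_lt_card_of_ssubset_image (hF : F ⊂ (range k).image fun i => 3 * i + 2) :
    ∃ F', isFacetP (3 * k) F' ∧ F ⊆ F' ∧ k < F'.card := by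
  obtain ⟨_, hx, hxF⟩ := exists_of_ssubset hF
  obtain ⟨j, hj, rfl⟩ := mem_image.1 hx
  obtain ⟨F', hF', hsub⟩ := exists_isFacetP_superset
    (isFaceP_insert_insert_of_subset_image hF.subset (mem_range.1 hj) hxF)
  refine ⟨F', hF', (subset_insert _ _).trans ((subset_insert _ _).trans hsub), ?_⟩
  refine hF'.le_card.lt_of_ne fun hcard => ?_
  obtain ⟨m, -, hm⟩ := mem_image.1 (hF'.eq_of_card_eq hcard.symm ▸ hsub (mem_insert_self _ _))
  omega

theorem unique_facet_card_k_of_path3k_general (k : ℕ)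
    (F₀ : Finset ℕ) (hF₀ : F₀ = (Finset.range k).image fun i => 3 * i + 2) :
    (isFacetP (3 * k) F₀ ∧ F₀.card = k) ∧
      (∀ F, isFacetP (3 * k) F → F.card = k → F = F₀) ∧
      ∀ F ⊂ F₀, ∃ F', isFacetP (3 * k) F' ∧ F ⊆ F' ∧ k < F'.card := by
  subst hF₀
  exact ⟨⟨isFacetP_image_three_mul_add_two, card_image_three_mul_add_two⟩,
    fun _ hF hcard => hF.eq_of_card_eq hcard,
    fun _ hF => exists_isFacetP_lt_card_of_ssubset_image hF⟩

/-- `Δ_{3k}` has a unique facet of cardinality `k`, namely `F₀ = {2, 5, 8, …, 3k-1}`, and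
every proper subset of `F₀` is contained in a facet of `Δ_{3k}` of cardinality greater
than `k`. -/
theorem unique_facet_card_k_of_path3k (k : ℕ) (hk : 1 ≤ k)
    (F₀ : Finset ℕ) (hF₀ : F₀ = (Finset.range k).image fun i => 3 * i + 2) :
    (isFacetP (3 * k) F₀ ∧ F₀.card = k) ∧
      (∀ F, isFacetP (3 * k) F → F.card = k → F = F₀) ∧
      ∀ F ⊂ F₀, ∃ F', isFacetP (3 * k) F' ∧ F ⊆ F' ∧ k < F'.card :=
  unique_facet_card_k_of_path3k_general k F₀ hF₀
end

section
/- Let Δ_{3k-1} be the clique complex of the complement of P_{3k-1} and let F_1,...,F_{k+1} be its facets of cardinality k. The number of faces F of ⟨F_1,...,F_{k+1}⟩ with |F| = k-1 that are contained in no facet of Δ_{3k-1} of cardinality greater than k is exactly k; moreover every face of ⟨F_1,...,F_{k+1}⟩ of cardinality less than k-1 is contained in some facet of cardinality greater than k. -/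
open Finset

attribute [local instance] Classical.propDecidable

/-!
A point of `[n]` is *free* for a face `F` if it can be added to `F`. Every point that is not
free lies within distance one of `F`, so `n ≤ #free + 3 |F|`; the free points of one parity
then extend `F` to a face of size at least `(n - |F|) / 2`, which settles faces of size
less than `k - 1`.

A face `F` lies in no face two elements larger iff its free points are contained in two
consecutive integers `u, u + 1`. For `|F| = k - 1` in `[3k - 1]` this makes the counting
tight on both sides of every `y ∈ F`: the non-free points left of `y - 1` are covered
by the elements of `F` below `y`, three at a time, and likewise on the right. This forces
`y ≡ 2 (mod 3)` below `u` and `y ≡ 1 (mod 3)` above `u + 1`, i.e.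
`F = {2, 5, …, 3t - 1} ∪ {3t + 4, …, 3k - 2}`.
-/

section Faces

variable {n : ℕ} {F : Finset ℕ}

lemma isFaceP.exists_isFacetP_superset (hF : isFaceP n F) : ∃ G, isFacetP n G ∧ F ⊆ G := by
  obtain ⟨G, hFG, hG, hmax⟩ := Finset.exists_le_maximal
    ((Icc 1 n).powerset.filter fun t => isFaceP n t ∧ F ⊆ t) (a := F)
    (mem_filter.2 ⟨mem_powerset.2 hF.1, hF, subset_rfl⟩)
  have hG' := (mem_filter.1 hG).2
  refine ⟨G, ⟨hG'.1, fun t ht hGt => le_antisymm (hmax ?_ hGt) hGt⟩, hFG⟩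
  exact mem_filter.2 ⟨mem_powerset.2 ht.1, ht, hG'.2.trans hGt⟩

lemma forall_isFaceP_card_le_iff {m : ℕ} :
    (∀ G, isFaceP n G → F ⊆ G → G.card ≤ m) ↔
      ¬ ∃ F', isFacetP n F' ∧ m < F'.card ∧ F ⊆ F' := by
  constructor
  · rintro h ⟨F', hF', hm, hFF'⟩
    exact absurd (h F' hF'.1 hFF') (not_le.2 hm)
  · intro h G hG hFG
    obtain ⟨F', hF', hGF'⟩ := hG.exists_isFacetP_superset
    by_contra hm
    exact h ⟨F', hF', (not_le.1 hm).trans_le (card_le_card hGF'), hFG.trans hGF'⟩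

def freeSet (n : ℕ) (F : Finset ℕ) : Finset ℕ :=
  (Icc 1 n).filter fun x => ∀ z ∈ F, z + 2 ≤ x ∨ x + 2 ≤ z

lemma mem_freeSet {x : ℕ} :
    x ∈ freeSet n F ↔ x ∈ Icc 1 n ∧ ∀ z ∈ F, z + 2 ≤ x ∨ x + 2 ≤ z :=
  mem_filter

lemma disjoint_freeSet : Disjoint F (freeSet n F) :=
  disjoint_left.2 fun z hz hfree => by have := (mem_freeSet.1 hfree).2 z hz; omega

lemma exists_near_of_notMem_freeSet {x : ℕ} (hx : x ∈ Icc 1 n) (hfree : x ∉ freeSet n F) :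
    ∃ z ∈ F, x ≤ z + 1 ∧ z ≤ x + 1 := by
  simp only [mem_freeSet, hx, true_and, not_forall, not_or, not_le] at hfree
  obtain ⟨z, hz, h⟩ := hfree
  exact ⟨z, hz, by omega, by omega⟩

lemma isFaceP_union (hF : isFaceP n F) {P : Finset ℕ} (hP : isFaceP n P)
    (hPF : P ⊆ freeSet n F) : isFaceP n (F ∪ P) := by
  refine ⟨union_subset hF.1 hP.1, fun i hi j hj hij => ?_⟩
  rcases mem_union.1 hi with hi | hi <;> rcases mem_union.1 hj with hj | hj
  · exact hF.2 i hi j hj hij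
  · have := (mem_freeSet.1 (hPF hj)).2 i hi; omega
  · have := (mem_freeSet.1 (hPF hi)).2 j hj; omega
  · exact hP.2 i hi j hj hij

lemma card_le_three_mul_of_near {S Z : Finset ℕ}
    (h : ∀ x ∈ S, ∃ z ∈ Z, x ≤ z + 1 ∧ z ≤ x + 1) : S.card ≤ 3 * Z.card :=
  calc S.card ≤ (Z.biUnion fun z => Icc (z - 1) (z + 1)).card :=
        card_le_card fun x hx => by
          obtain ⟨z, hz, h1, h2⟩ := h x hx
          exact mem_biUnion.2 ⟨z, hz, mem_Icc.2 ⟨by omega, h1⟩⟩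
    _ ≤ ∑ z ∈ Z, (Icc (z - 1) (z + 1)).card := card_biUnion_le
    _ ≤ ∑ _z ∈ Z, 3 := sum_le_sum fun z _ => by simp only [Nat.card_Icc]; omega
    _ = 3 * Z.card := by rw [sum_const, smul_eq_mul, mul_comm]

lemma le_card_freeSet_add : n ≤ (freeSet n F).card + 3 * F.card := by
  have hnear : (Icc 1 n \ freeSet n F).card ≤ 3 * F.card :=
    card_le_three_mul_of_near fun x hx =>
      exists_near_of_notMem_freeSet (mem_sdiff.1 hx).1 (mem_sdiff.1 hx).2
  have hsub : freeSet n F ⊆ Icc 1 n := filter_subset _ _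
  have := card_sdiff_add_card_eq_card hsub
  rw [Nat.card_Icc] at this
  omega

lemma exists_parity_card_filter (S : Finset ℕ) :
    ∃ p, S.card ≤ 2 * (S.filter fun x => x % 2 = p).card := by
  have h := card_filter_add_card_filter_not (s := S) fun x => x % 2 = 0
  rw [filter_congr fun x _ => show ¬x % 2 = 0 ↔ x % 2 = 1 by omega] at h
  by_cases h0 : S.card ≤ 2 * (S.filter fun x => x % 2 = 0).card
  · exact ⟨0, h0⟩
  · exact ⟨1, by omega⟩

lemma isFaceP.exists_superset_card (hF : isFaceP n F) :
    ∃ G, isFaceP n G ∧ F ⊆ G ∧ n ≤ 2 * G.card + F.card := by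
  obtain ⟨p, hp⟩ := exists_parity_card_filter (freeSet n F)
  set P := (freeSet n F).filter fun x => x % 2 = p
  have hPfree : P ⊆ freeSet n F := filter_subset _ _
  -- distinct numbers of the same parity are at least two apart
  have hP : isFaceP n P := ⟨hPfree.trans (filter_subset _ _), fun i hi j hj hij => by
    have := (mem_filter.1 hi).2; have := (mem_filter.1 hj).2; omega⟩
  refine ⟨F ∪ P, isFaceP_union hF hP hPfree, subset_union_left, ?_⟩
  rw [card_union_of_disjoint (disjoint_freeSet.mono_right hPfree)]
  have := le_card_freeSet_add (n := n) (F := F)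
  omega

lemma isFaceP.exists_isFacetP_card_gt (hF : isFaceP n F) {m : ℕ} (h : 2 * m + F.card < n) :
    ∃ F', isFacetP n F' ∧ m < F'.card ∧ F ⊆ F' := by
  obtain ⟨G, hG, hFG, hcard⟩ := hF.exists_superset_card
  obtain ⟨F', hF', hGF'⟩ := hG.exists_isFacetP_superset
  exact ⟨F', hF', by have := card_le_card hGF'; omega, hFG.trans hGF'⟩

lemma isFaceP.forall_card_le_succ_iff (hF : isFaceP n F) :
    (∀ G, isFaceP n G → F ⊆ G → G.card ≤ F.card + 1) ↔
      ∀ u ∈ freeSet n F, ∀ v ∈ freeSet n F, v ≤ u + 1 := by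
  constructor
  · intro h u hu v hv
    by_contra! huv
    have hpair : isFaceP n {u, v} := by
      have := (mem_freeSet.1 hu).1; have := (mem_freeSet.1 hv).1
      refine ⟨insert_subset_iff.2 ⟨‹_›, singleton_subset_iff.2 ‹_›⟩, ?_⟩
      simp only [mem_insert, mem_singleton]
      omega
    have hsub : {u, v} ⊆ freeSet n F := insert_subset_iff.2 ⟨hu, singleton_subset_iff.2 hv⟩
    have := h _ (isFaceP_union hF hpair hsub) subset_union_left
    rw [card_union_of_disjoint (disjoint_freeSet.mono_right hsub), card_pair (by omega)] at this
    omega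
  · intro h G hG hFG
    have hfree : G \ F ⊆ freeSet n F := fun x hx => by
      obtain ⟨hxG, hxF⟩ := mem_sdiff.1 hx
      refine mem_freeSet.2 ⟨hG.1 hxG, fun z hz => ?_⟩
      have hzx : z ≠ x := fun h => hxF (h ▸ hz)
      rcases lt_or_gt_of_ne hzx with hlt | hlt
      · exact Or.inl (hG.2 z (hFG hz) x hxG hlt)
      · exact Or.inr (hG.2 x hxG z (hFG hz) hlt)
    have hle : (G \ F).card ≤ 1 := card_le_one.2 fun a ha b hb => by
      by_contra hab
      have := h a (hfree ha) b (hfree hb); have := h b (hfree hb) a (hfree ha)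
      rcases lt_or_gt_of_ne hab with hlt | hlt
      · have := hG.2 a (mem_sdiff.1 ha).1 b (mem_sdiff.1 hb).1 hlt; omega
      · have := hG.2 b (mem_sdiff.1 hb).1 a (mem_sdiff.1 ha).1 hlt; omega
    have := card_sdiff_add_card_eq_card hFG
    omega

lemma card_Icc_sdiff_le_three_mul_card_filter_lt {E : Finset ℕ} (hE : freeSet n F ⊆ E) {y : ℕ}
    (hy : y ≤ n) : (Icc 1 (y - 2) \ E).card ≤ 3 * (F.filter (· < y)).card :=
  card_le_three_mul_of_near fun x hx => by
    obtain ⟨hx, hxE⟩ := mem_sdiff.1 hx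
    rw [mem_Icc] at hx
    obtain ⟨z, hz, h1, h2⟩ :=
      exists_near_of_notMem_freeSet (mem_Icc.2 ⟨hx.1, by omega⟩) fun h => hxE (hE h)
    exact ⟨z, mem_filter.2 ⟨hz, by omega⟩, h1, h2⟩

lemma card_Icc_sdiff_le_three_mul_card_filter_gt {E : Finset ℕ} (hE : freeSet n F ⊆ E)
    (y : ℕ) : (Icc (y + 2) n \ E).card ≤ 3 * (F.filter (y < ·)).card :=
  card_le_three_mul_of_near fun x hx => by
    obtain ⟨hx, hxE⟩ := mem_sdiff.1 hx
    rw [mem_Icc] at hx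
    obtain ⟨z, hz, h1, h2⟩ :=
      exists_near_of_notMem_freeSet (mem_Icc.2 ⟨by omega, hx.2⟩) fun h => hxE (hE h)
    exact ⟨z, mem_filter.2 ⟨hz, by omega⟩, h1, h2⟩

lemma card_filter_lt_add_card_filter_gt_lt_card {y : ℕ} (hy : y ∈ F) :
    (F.filter (· < y)).card + (F.filter (y < ·)).card < F.card := by
  rw [← card_union_of_disjoint (disjoint_filter.2 fun _ _ h1 h2 => by omega)]
  refine card_lt_card ⟨union_subset (filter_subset _ _) (filter_subset _ _), fun h => ?_⟩
  simpa using h hy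

lemma card_sub_two_le_card_sdiff_pair (S : Finset ℕ) (u : ℕ) :
    S.card - 2 ≤ (S \ {u, u + 1}).card :=
  (Nat.sub_le_sub_left card_le_two _).trans (le_card_sdiff _ _)

end Faces

/-- `gapFace k t = {2, 5, …, 3t - 1} ∪ {3t + 4, …, 3k - 2}`. -/
def gapFace (k t : ℕ) : Finset ℕ :=
  (Icc 1 (k - 1)).image fun i => if i ≤ t then 3 * i - 1 else 3 * i + 1

section GapFace

variable {k t : ℕ}

lemma mem_gapFace {x : ℕ} :
    x ∈ gapFace k t ↔
      x ≤ 3 * k - 2 ∧ (x ≤ 3 * t ∧ x % 3 = 2 ∨ 3 * t + 1 < x ∧ x % 3 = 1) := by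
  simp only [gapFace, mem_image, mem_Icc]
  constructor
  · rintro ⟨i, hi, rfl⟩
    split_ifs <;> omega
  · rintro ⟨hx, h | h⟩
    · exact ⟨(x + 1) / 3, by omega, by rw [if_pos (by omega)]; omega⟩
    · exact ⟨(x - 1) / 3, by omega, by rw [if_neg (by omega)]; omega⟩

lemma card_gapFace : (gapFace k t).card = k - 1 := by
  rw [gapFace, card_image_of_injOn, Nat.card_Icc, Nat.add_sub_cancel]
  intro i _ j _ hij
  simp only at hij
  split_ifs at hij <;> omega

lemma isFaceP_gapFace : isFaceP (3 * k - 1) (gapFace k t) := by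
  refine ⟨fun x hx => ?_, fun i hi j hj hij => ?_⟩
  · rw [mem_gapFace] at hx
    rw [mem_Icc]
    omega
  · rw [mem_gapFace] at hi hj
    omega

lemma eq_of_mem_freeSet_gapFace (ht : t < k) {x : ℕ}
    (hx : x ∈ freeSet (3 * k - 1) (gapFace k t)) :
    x = 3 * t + 1 ∨ x = 3 * t + 2 := by
  obtain ⟨hx, hfree⟩ := mem_freeSet.1 hx
  rw [mem_Icc] at hx
  by_contra! hne
  by_cases hxt : x ≤ 3 * t
  · have := hfree (3 * ((x + 2) / 3) - 1) (mem_gapFace.2 (by omega))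
    omega
  · have := hfree (3 * (x / 3) + 1) (mem_gapFace.2 (by omega))
    omega

lemma three_mul_add_one_mem_freeSet_gapFace (ht : t < k) :
    3 * t + 1 ∈ freeSet (3 * k - 1) (gapFace k t) :=
  mem_freeSet.2 ⟨mem_Icc.2 ⟨by omega, by omega⟩, fun z hz => by
    rw [mem_gapFace] at hz; omega⟩

lemma gapFace_injOn : Set.InjOn (gapFace k) (Set.Iio k) := by
  -- `3 t₁ + 2` lies in `gapFace k t₂` exactly when `t₁ < t₂`
  have key : ∀ t₁ t₂, t₁ < t₂ → t₂ < k → gapFace k t₁ ≠ gapFace k t₂ := by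
    intro t₁ t₂ h12 h2 heq
    have h := (mem_gapFace (k := k) (t := t₂) (x := 3 * t₁ + 2)).2 (by omega)
    rw [← heq, mem_gapFace] at h
    omega
  intro t₁ h1 t₂ h2 heq
  rcases lt_trichotomy t₁ t₂ with h | h | h
  · exact absurd heq (key t₁ t₂ h h2)
  · exact h
  · exact absurd heq.symm (key t₂ t₁ h h1)

lemma isFaceP.mem_gapFace_of_freeSet_subset {F : Finset ℕ} (hF : isFaceP (3 * k - 1) F)
    (hcard : F.card = k - 1) {u : ℕ} (hu : u ∈ freeSet (3 * k - 1) F)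
    (hE : freeSet (3 * k - 1) F ⊆ {u, u + 1}) {y : ℕ} (hy : y ∈ F) :
    y ∈ gapFace k ((u - 1) / 3) := by
  have hsplit := card_filter_lt_add_card_filter_gt_lt_card hy
  have hyn := mem_Icc.1 (hF.1 hy)
  have hun := mem_Icc.1 (mem_freeSet.1 hu).1
  have hlo := card_Icc_sdiff_le_three_mul_card_filter_lt hE hyn.2
  have hhi := card_Icc_sdiff_le_three_mul_card_filter_gt hE y
  have hlo' := card_sub_two_le_card_sdiff_pair (Icc 1 (y - 2)) u
  have hhi' := card_sub_two_le_card_sdiff_pair (Icc (y + 2) (3 * k - 1)) u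
  -- `{u, u + 1}` lies on one side of `y`; on the other side nothing is removed
  have hdisj : ∀ a b, b < u ∨ u + 1 < a → Icc a b \ {u, u + 1} = Icc a b := fun a b h =>
    sdiff_eq_self_of_disjoint (disjoint_left.2 fun x hx hx' => by
      simp only [mem_Icc, mem_insert, mem_singleton] at hx hx'; omega)
  rcases (mem_freeSet.1 hu).2 y hy with hyu | hyu
  · rw [hdisj 1 (y - 2) (by omega)] at hlo
    simp only [Nat.card_Icc] at hlo hhi'
    exact mem_gapFace.2 (by omega)
  · rw [hdisj (y + 2) (3 * k - 1) (by omega)] at hhi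
    simp only [Nat.card_Icc] at hhi hlo'
    exact mem_gapFace.2 (by omega)

lemma isFaceP.exists_gapFace_eq {F : Finset ℕ} (hk : 1 ≤ k) (hF : isFaceP (3 * k - 1) F)
    (hcard : F.card = k - 1)
    (htight : ∀ u ∈ freeSet (3 * k - 1) F, ∀ v ∈ freeSet (3 * k - 1) F, v ≤ u + 1) :
    ∃ t < k, gapFace k t = F := by
  have hne : (freeSet (3 * k - 1) F).Nonempty :=
    card_pos.1 (by have := le_card_freeSet_add (n := 3 * k - 1) (F := F); omega)
  set u := (freeSet (3 * k - 1) F).min' hne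
  have hu : u ∈ freeSet (3 * k - 1) F := min'_mem _ _
  have hE : freeSet (3 * k - 1) F ⊆ {u, u + 1} := fun x hx => by
    have := min'_le _ x hx; have := htight u hu x hx
    simp only [mem_insert, mem_singleton]; omega
  refine ⟨(u - 1) / 3, by have := mem_Icc.1 (mem_freeSet.1 hu).1; omega, ?_⟩
  refine (eq_of_subset_of_card_le (fun y hy => ?_) (by rw [card_gapFace, hcard])).symm
  exact hF.mem_gapFace_of_freeSet_subset hcard hu hE hy

end GapFace

lemma exists_gapFace_eq_iff {k : ℕ} (hk : 1 ≤ k) {F : Finset ℕ} :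
    (∃ t < k, gapFace k t = F) ↔
      isFaceP (3 * k - 1) F ∧ F.card = k - 1 ∧
        (∃ Fi, isFacetP (3 * k - 1) Fi ∧ Fi.card = k ∧ F ⊆ Fi) ∧
        ¬ ∃ F', isFacetP (3 * k - 1) F' ∧ k < F'.card ∧ F ⊆ F' := by
  constructor
  · rintro ⟨t, ht, rfl⟩
    have htight : ∀ G, isFaceP (3 * k - 1) G → gapFace k t ⊆ G → G.card ≤ k := by
      have := isFaceP_gapFace.forall_card_le_succ_iff.2 fun u hu v hv => by
        have := eq_of_mem_freeSet_gapFace ht hu; have := eq_of_mem_freeSet_gapFace ht hv; omega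
      rwa [card_gapFace, Nat.sub_add_cancel hk] at this
    refine ⟨isFaceP_gapFace, card_gapFace, ?_, forall_isFaceP_card_le_iff.1 htight⟩
    have hins := isFaceP_union isFaceP_gapFace (P := {3 * t + 1})
      ⟨singleton_subset_iff.2 (mem_Icc.2 ⟨by omega, by omega⟩), by simp⟩
      (singleton_subset_iff.2 (three_mul_add_one_mem_freeSet_gapFace ht))
    obtain ⟨G, hG, hsub⟩ := hins.exists_isFacetP_superset
    have hlo := card_le_card hsub
    rw [card_union_of_disjoint (disjoint_singleton_right.2 fun h => by
      rw [mem_gapFace] at h; omega), card_gapFace, card_singleton] at hlo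
    exact ⟨G, hG, le_antisymm (htight G hG.1 (subset_union_left.trans hsub)) (by omega),
      subset_union_left.trans hsub⟩
  · rintro ⟨hF, hcard, -, hbig⟩
    refine hF.exists_gapFace_eq hk hcard (hF.forall_card_le_succ_iff.1 ?_)
    rw [hcard, Nat.sub_add_cancel hk]
    exact forall_isFaceP_card_le_iff.2 hbig

/-- Let `F_1, …, F_{k+1}` be the facets of `Δ_{3k-1}` of cardinality `k`. Exactly `k`
faces `F` of the subcomplex `⟨F_1, …, F_{k+1}⟩` with `|F| = k - 1` are contained in no
facet of `Δ_{3k-1}` of cardinality greater than `k`; moreover every face of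
`⟨F_1, …, F_{k+1}⟩` of cardinality less than `k - 1` is contained in some facet of
cardinality greater than `k`. -/
theorem faces_of_small_facets_path3k_sub_one (k : ℕ) (hk : 1 ≤ k) :
    ((Finset.Icc 1 (3 * k - 1)).powerset.filter fun F =>
        isFaceP (3 * k - 1) F ∧ F.card = k - 1 ∧
          (∃ Fi, isFacetP (3 * k - 1) Fi ∧ Fi.card = k ∧ F ⊆ Fi) ∧
          ¬ ∃ F', isFacetP (3 * k - 1) F' ∧ k < F'.card ∧ F ⊆ F').card = k ∧
      ∀ F : Finset ℕ, isFaceP (3 * k - 1) F → F.card + 1 < k →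
        (∃ Fi, isFacetP (3 * k - 1) Fi ∧ Fi.card = k ∧ F ⊆ Fi) →
          ∃ F', isFacetP (3 * k - 1) F' ∧ k < F'.card ∧ F ⊆ F' := by
  refine ⟨?_, fun F hF hcard _ => hF.exists_isFacetP_card_gt (by omega)⟩
  calc _ = ((range k).image (gapFace k)).card := by
        congr 1
        ext F
        simp only [mem_filter, mem_powerset, mem_image, mem_range, exists_gapFace_eq_iff hk]
        exact ⟨fun h => h.2, fun h => ⟨h.1.1, h⟩⟩
    _ = k := by rw [card_image_of_injOn (by simpa using gapFace_injOn), card_range]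
end

section
/- For every n ≥ 4 and every i, the reduced simplicial homology groups satisfy H̃_i(Δ_n; K) ≅ H̃_{i-1}(Δ_{n-3}; K), where Δ_n is the clique complex of the complement of the path P_n. -/
open Finset

attribute [local instance] Classical.propDecidable

variable (K : Type) [Field K]

/-- Quotient of the submodule `A` by (the pullback of) the submodule `B`. -/
noncomputable def quotMod {M : Type} [AddCommGroup M] [Module K M] (A B : Submodule K M) :
    Type :=
  ↥A ⧸ Submodule.comap A.subtype B

noncomputable instance {M : Type} [AddCommGroup M] [Module K M] (A B : Submodule K M) :
    AddCommGroup (quotMod K A B) :=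
  inferInstanceAs (AddCommGroup (↥A ⧸ Submodule.comap A.subtype B))

noncomputable instance {M : Type} [AddCommGroup M] [Module K M] (A B : Submodule K M) :
    Module K (quotMod K A B) :=
  inferInstanceAs (Module K (↥A ⧸ Submodule.comap A.subtype B))

variable {n : ℕ}

/-- The simplicial boundary operator on the total chain module spanned by all
subsets of `Fin n` (the empty set accounting for the augmentation). -/
noncomputable def bdry : ((Finset (Fin n)) →₀ K) →ₗ[K] ((Finset (Fin n)) →₀ K) :=
  Finsupp.lsum K fun s => LinearMap.toSpanSingleton K _
    (∑ v ∈ s, ((-1 : K) ^ (s.filter (· < v)).card) • Finsupp.single (s.erase v) (1 : K))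

/-- The subspace of chains of the complex `Δ` spanned by faces of cardinality `c`. -/
noncomputable def degSub (Δ : Finset (Finset (Fin n))) (c : ℕ) :
    Submodule K ((Finset (Fin n)) →₀ K) :=
  Submodule.span K {x | ∃ s ∈ Δ, s.card = c ∧ x = Finsupp.single s (1 : K)}

/-- Reduced homology of `Δ` at chain level `c`, that is, `H̃_{c-1}(Δ; K)`:
cycles supported in faces of cardinality `c` modulo boundaries of chains
supported in faces of cardinality `c + 1`. -/
noncomputable def homologyLevel (Δ : Finset (Finset (Fin n))) (c : ℕ) : Type :=
  quotMod K (degSub K Δ c ⊓ LinearMap.ker (bdry K))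
    (Submodule.map (bdry K) (degSub K Δ (c + 1)))

noncomputable instance (Δ : Finset (Finset (Fin n))) (c : ℕ) :
    AddCommGroup (homologyLevel K Δ c) :=
  inferInstanceAs (AddCommGroup (quotMod K _ _))

noncomputable instance (Δ : Finset (Finset (Fin n))) (c : ℕ) :
    Module K (homologyLevel K Δ c) :=
  inferInstanceAs (Module K (quotMod K _ _))

/-- The `i`-th reduced simplicial homology `H̃_i(Δ; K)`. -/
noncomputable def reducedHomology (Δ : Finset (Finset (Fin n))) (i : ℕ) : Type :=
  homologyLevel K Δ (i + 1)

noncomputable instance (Δ : Finset (Finset (Fin n))) (i : ℕ) :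
    AddCommGroup (reducedHomology K Δ i) :=
  inferInstanceAs (AddCommGroup (homologyLevel K Δ (i + 1)))

noncomputable instance (Δ : Finset (Finset (Fin n))) (i : ℕ) :
    Module K (reducedHomology K Δ i) :=
  inferInstanceAs (Module K (homologyLevel K Δ (i + 1)))

/-- The independence complex of `G`, i.e. the clique complex of `Gᶜ`. -/
noncomputable def indepCx (G : SimpleGraph (Fin n)) : Finset (Finset (Fin n)) :=
  Finset.univ.powerset.filter fun s => ∀ i ∈ s, ∀ j ∈ s, ¬ G.Adj i j

/-- The link of a face `F` in the complex `Δ`. -/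
noncomputable def linkCx (Δ : Finset (Finset (Fin n))) (F : Finset (Fin n)) :
    Finset (Finset (Fin n)) :=
  Finset.univ.powerset.filter fun s => Disjoint s F ∧ s ∪ F ∈ Δ

/-- The graded Betti number `β_{i,d}` of the vertex cover ideal `J(G)`, expressed via
Hochster's formula: `β_{i,d}(J(G)) = Σ_{F ∈ Δ(Gᶜ), |F| = n - d} dim H̃_{i-1}(link F)`. -/
noncomputable def coverBetti (G : SimpleGraph (Fin n)) (i d : ℕ) : ℕ :=
  ∑ F ∈ (indepCx G).filter (fun F => F.card + d = n),
    Module.finrank K (homologyLevel K (linkCx (indepCx G) F) i)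

/-- The projective dimension of the vertex cover ideal `J(G)`. -/
noncomputable def projdimJ (G : SimpleGraph (Fin n)) : ℕ :=
  sSup {i | ∃ d, coverBetti K G i d ≠ 0}

/-- The Castelnuovo–Mumford regularity of the vertex cover ideal `J(G)`. -/
noncomputable def regJ (G : SimpleGraph (Fin n)) : ℕ :=
  sSup {j | ∃ i, coverBetti K G i (i + j) ≠ 0}

open SimpleGraph

/-!
Index the vertices of `Δ_n` by `0, …, n - 1` and put `v = n - 2`, `w = n - 1`. Every face
containing `v` has `v` as its largest vertex, the link of `v` is `Δ_{n-3}` on the vertices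
`< n - 3`, and the faces avoiding `v` form a cone with apex `w`. The chain map
`τ ↦ v * τ - w * τ` from the link to `Δ_n` is then an isomorphism in homology, raising the degree
by one: taking the coefficient of `v` inverts it, and a cycle minus the image of its
`v`-coefficient avoids `v`, so it bounds in the cone. This is the connecting isomorphism of the
Mayer–Vietoris sequence of `Δ_n = st(v) ∪ del(v)`, written out on chains.
-/

namespace Finsupp

variable {α β R M : Type*} [Semiring R] [AddCommMonoid M] [Module R M]

theorem eqOn_supported {S : Set α} {f g : (α →₀ R) →ₗ[R] M}
    (h : ∀ s ∈ S, f (single s 1) = g (single s 1)) {x : α →₀ R} (hx : x ∈ supported R R S) :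
    f x = g x := by
  rw [supported_eq_span_single] at hx
  exact LinearMap.eqOn_span' (by rintro _ ⟨s, hs, rfl⟩; exact h s hs) hx

theorem map_mem_supported {S : Set α} {T : Set β} {f : (α →₀ R) →ₗ[R] (β →₀ R)}
    (h : ∀ s ∈ S, f (single s 1) ∈ supported R R T) {x : α →₀ R} (hx : x ∈ supported R R S) :
    f x ∈ supported R R T := by
  have hmap : (supported R R S).map f ≤ supported R R T := by
    rw [supported_eq_span_single, Submodule.map_span_le]
    rintro _ ⟨s, hs, rfl⟩
    exact h s hs
  exact hmap ⟨x, hx, rfl⟩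

end Finsupp

theorem nonempty_quotMod_equiv {M N : Type} [AddCommGroup M] [Module K M] [AddCommGroup N]
    [Module K N] {A₁ B₁ : Submodule K M} {A₂ B₂ : Submodule K N} (Φ : M →ₗ[K] N)
    (hA : ∀ z ∈ A₁, Φ z ∈ A₂) (hB : ∀ z ∈ A₁, Φ z ∈ B₂ ↔ z ∈ B₁)
    (hsurj : ∀ ζ ∈ A₂, ∃ z ∈ A₁, ζ - Φ z ∈ B₂) :
    Nonempty (quotMod K A₁ B₁ ≃ₗ[K] quotMod K A₂ B₂) := by
  let f : A₁ →ₗ[K] A₂ ⧸ B₂.comap A₂.subtype := (Submodule.mkQ _).comp (Φ.restrict hA)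
  have hker : LinearMap.ker f = B₁.comap A₁.subtype := by
    ext z
    simpa [f, Submodule.Quotient.mk_eq_zero] using hB z z.2
  let g := (B₁.comap A₁.subtype).liftQ f hker.ge
  have hinj : Function.Injective g := by
    rw [← LinearMap.ker_eq_bot]
    exact Submodule.ker_liftQ_eq_bot _ _ _ hker.le
  have hsurj' : Function.Surjective g := by
    intro y
    obtain ⟨⟨ζ, hζ⟩, rfl⟩ := Submodule.mkQ_surjective _ y
    obtain ⟨z, hz, hzB⟩ := hsurj ζ hζ
    refine ⟨Submodule.Quotient.mk ⟨z, hz⟩, (Submodule.Quotient.eq _).2 ?_⟩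
    simpa [f] using neg_mem hzB
  exact ⟨LinearEquiv.ofBijective g ⟨hinj, hsurj'⟩⟩

namespace SimplicialChains

variable {K}

theorem degSub_eq_supported (Δ : Finset (Finset (Fin n))) (c : ℕ) :
    degSub K Δ c = Finsupp.supported K K {s | s ∈ Δ ∧ s.card = c} := by
  rw [Finsupp.supported_eq_span_single, degSub]
  congr 1
  ext x
  simp [and_assoc, eq_comm]

theorem bdry_single (s : Finset (Fin n)) :
    bdry K (Finsupp.single s 1) =
      ∑ v ∈ s, (-1 : K) ^ (s.filter (· < v)).card • Finsupp.single (s.erase v) 1 := by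
  simp [bdry]

theorem bdry_mem_supported {S T : Set (Finset (Fin n))} (h : ∀ s ∈ S, ∀ y ∈ s, s.erase y ∈ T)
    {u : Finset (Fin n) →₀ K} (hu : u ∈ Finsupp.supported K K S) :
    bdry K u ∈ Finsupp.supported K K T := by
  refine Finsupp.map_mem_supported (fun s hs => ?_) hu
  rw [bdry_single]
  exact Submodule.sum_mem _ fun y hy =>
    Submodule.smul_mem _ _ (Finsupp.single_mem_supported K _ (h s hs y hy))

noncomputable def cone (x : Fin n) : (Finset (Fin n) →₀ K) →ₗ[K] (Finset (Fin n) →₀ K) :=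
  Finsupp.lmapDomain K K (insert x)

@[simp] theorem cone_single (x : Fin n) (s : Finset (Fin n)) :
    cone x (Finsupp.single s (1 : K)) = Finsupp.single (insert x s) 1 := by
  simp [cone]

theorem cone_mem_supported {x : Fin n} {S T : Set (Finset (Fin n))}
    (h : ∀ s ∈ S, insert x s ∈ T) {u : Finset (Fin n) →₀ K}
    (hu : u ∈ Finsupp.supported K K S) : cone x u ∈ Finsupp.supported K K T :=
  Finsupp.map_mem_supported (fun s hs => by
    rw [cone_single]; exact Finsupp.single_mem_supported K _ (h s hs)) hu

theorem bdry_mem_supported_notMem {v : Fin n} {u : Finset (Fin n) →₀ K}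
    (hu : u ∈ Finsupp.supported K K {s | v ∉ s}) :
    bdry K u ∈ Finsupp.supported K K {s | v ∉ s} := by
  refine bdry_mem_supported ?_ hu
  exact fun _ hs _ _ hmem => hs (Finset.mem_of_mem_erase hmem)

theorem cone_mem_supported_notMem {v x : Fin n} (hvx : v ≠ x) {u : Finset (Fin n) →₀ K}
    (hu : u ∈ Finsupp.supported K K {s | v ∉ s}) :
    cone x u ∈ Finsupp.supported K K {s | v ∉ s} := by
  refine cone_mem_supported ?_ hu
  exact fun _ hs hmem => hs ((Finset.mem_insert.1 hmem).resolve_left hvx)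

theorem bdry_single_insert {x : Fin n} {s : Finset (Fin n)} (hs : ∀ y ∈ s, y < x) :
    bdry K (Finsupp.single (insert x s) 1) =
      (-1 : K) ^ s.card • Finsupp.single s 1 + cone x (bdry K (Finsupp.single s 1)) := by
  have hx : x ∉ s := fun h => lt_irrefl x (hs x h)
  have hfilter : (insert x s).filter (· < x) = s := by
    ext y
    simp only [Finset.mem_filter, Finset.mem_insert]
    exact ⟨fun ⟨hy, hyx⟩ => hy.resolve_left hyx.ne, fun hy => ⟨Or.inr hy, hs y hy⟩⟩
  rw [bdry_single, bdry_single, Finset.sum_insert hx, hfilter, Finset.erase_insert hx, map_sum]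
  congr 1
  refine Finset.sum_congr rfl fun y hy => ?_
  rw [Finset.filter_insert, if_neg (lt_asymm (hs y hy)),
    Finset.erase_insert_of_ne (hs y hy).ne', map_smul, cone_single]

theorem bdry_cone {x : Fin n} {c : ℕ} {u : Finset (Fin n) →₀ K}
    (hu : u ∈ Finsupp.supported K K {s | s.card = c ∧ ∀ y ∈ s, y < x}) :
    bdry K (cone x u) = (-1 : K) ^ c • u + cone x (bdry K u) :=
  Finsupp.eqOn_supported (f := (bdry K).comp (cone x))
    (g := (-1 : K) ^ c • LinearMap.id + (cone x).comp (bdry K))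
    (by rintro s ⟨rfl, hs⟩; simp [bdry_single_insert hs]) hu

noncomputable def contract (v : Fin n) : (Finset (Fin n) →₀ K) →ₗ[K] (Finset (Fin n) →₀ K) :=
  Finsupp.linearCombination K fun s => if v ∈ s then Finsupp.single (s.erase v) 1 else 0

theorem contract_single_of_mem {v : Fin n} {s : Finset (Fin n)} (h : v ∈ s) :
    contract v (Finsupp.single s (1 : K)) = Finsupp.single (s.erase v) 1 := by
  simp [contract, h]

theorem contract_single_of_notMem {v : Fin n} {s : Finset (Fin n)} (h : v ∉ s) :
    contract v (Finsupp.single s (1 : K)) = 0 := by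
  simp [contract, h]

theorem contract_mem_supported {v : Fin n} {S T : Set (Finset (Fin n))}
    (h : ∀ s ∈ S, v ∈ s → s.erase v ∈ T) {u : Finset (Fin n) →₀ K}
    (hu : u ∈ Finsupp.supported K K S) : contract v u ∈ Finsupp.supported K K T := by
  refine Finsupp.map_mem_supported (fun s hs => ?_) hu
  by_cases hv : v ∈ s
  · rw [contract_single_of_mem hv]; exact Finsupp.single_mem_supported K _ (h s hs hv)
  · rw [contract_single_of_notMem hv]; exact Submodule.zero_mem _

theorem contract_eq_zero {v : Fin n} {u : Finset (Fin n) →₀ K}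
    (hu : u ∈ Finsupp.supported K K {s | v ∉ s}) : contract v u = 0 :=
  Finsupp.eqOn_supported (g := 0) (fun _ hs => contract_single_of_notMem hs) hu

theorem contract_cone_self {v : Fin n} {u : Finset (Fin n) →₀ K}
    (hu : u ∈ Finsupp.supported K K {s | v ∉ s}) : contract v (cone v u) = u :=
  Finsupp.eqOn_supported (f := (contract v).comp (cone v)) (g := LinearMap.id)
    (fun s hs => by
      simp [contract_single_of_mem (Finset.mem_insert_self v s), Finset.erase_insert hs]) hu

theorem contract_bdry {v : Fin n} {u : Finset (Fin n) →₀ K}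
    (hu : u ∈ Finsupp.supported K K {s | v ∈ s → ∀ x ∈ s, x ≤ v}) :
    contract v (bdry K u) = bdry K (contract v u) := by
  refine Finsupp.eqOn_supported (f := (contract v).comp (bdry K))
    (g := (bdry K).comp (contract v)) (fun s hs => ?_) hu
  have hfree : ∀ {t : Finset (Fin n)}, v ∉ t →
      bdry K (Finsupp.single t 1) ∈ Finsupp.supported K K {s | v ∉ s} := fun ht =>
    bdry_mem_supported_notMem (Finsupp.single_mem_supported K _ ht)
  by_cases hv : v ∈ s
  · have hlt : ∀ y ∈ s.erase v, y < v := fun y hy =>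
      (hs hv y (Finset.mem_of_mem_erase hy)).lt_of_ne (Finset.ne_of_mem_erase hy)
    rw [LinearMap.comp_apply, LinearMap.comp_apply, ← Finset.insert_erase hv,
      bdry_single_insert hlt, map_add, map_smul,
      contract_single_of_notMem (Finset.notMem_erase v s), smul_zero, zero_add,
      contract_cone_self (hfree (Finset.notMem_erase v s)),
      contract_single_of_mem (Finset.mem_insert_self v _), Finset.erase_insert
        (Finset.notMem_erase v s)]
  · simp [contract_eq_zero (hfree hv), contract_single_of_notMem hv]

theorem sub_cone_contract_mem_supported {v : Fin n} {S : Set (Finset (Fin n))}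
    {u : Finset (Fin n) →₀ K} (hu : u ∈ Finsupp.supported K K S) :
    u - cone v (contract v u) ∈ Finsupp.supported K K {s | s ∈ S ∧ v ∉ s} := by
  refine Finsupp.map_mem_supported (f := LinearMap.id - (cone v).comp (contract v))
    (fun s hs => ?_) hu
  by_cases hv : v ∈ s
  · simp [contract_single_of_mem hv, Finset.insert_erase hv]
  · simpa [contract_single_of_notMem hv] using
      Finsupp.single_mem_supported K (1 : K) (show s ∈ {s | s ∈ S ∧ v ∉ s} from ⟨hs, hv⟩)

noncomputable def coneHomotopy (w : Fin n) :
    (Finset (Fin n) →₀ K) →ₗ[K] (Finset (Fin n) →₀ K) :=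
  Finsupp.linearCombination K fun s =>
    if w ∈ s then 0 else (-1 : K) ^ s.card • Finsupp.single (insert w s) 1

theorem coneHomotopy_single_of_notMem {w : Fin n} {s : Finset (Fin n)} (h : w ∉ s) :
    coneHomotopy w (Finsupp.single s (1 : K)) =
      (-1 : K) ^ s.card • Finsupp.single (insert w s) 1 := by
  simp [coneHomotopy, h]

theorem coneHomotopy_single_of_mem {w : Fin n} {s : Finset (Fin n)} (h : w ∈ s) :
    coneHomotopy w (Finsupp.single s (1 : K)) = 0 := by
  simp [coneHomotopy, h]

theorem coneHomotopy_cone (w : Fin n) (u : Finset (Fin n) →₀ K) :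
    coneHomotopy w (cone w u) = 0 := by
  have hzero : (coneHomotopy w).comp (cone w) = (0 : (Finset (Fin n) →₀ K) →ₗ[K] _) :=
    Finsupp.lhom_ext' fun s => LinearMap.ext_ring (by simp [coneHomotopy])
  exact LinearMap.congr_fun hzero u

theorem coneHomotopy_mem_supported {w : Fin n} {S T : Set (Finset (Fin n))}
    (h : ∀ s ∈ S, w ∉ s → insert w s ∈ T) {u : Finset (Fin n) →₀ K}
    (hu : u ∈ Finsupp.supported K K S) : coneHomotopy w u ∈ Finsupp.supported K K T := by
  refine Finsupp.map_mem_supported (fun s hs => ?_) hu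
  by_cases hw : w ∈ s
  · rw [coneHomotopy_single_of_mem hw]; exact Submodule.zero_mem _
  · rw [coneHomotopy_single_of_notMem hw]
    exact Submodule.smul_mem _ _ (Finsupp.single_mem_supported K _ (h s hs hw))

theorem coneHomotopy_bdry_single {w : Fin n} {s : Finset (Fin n)} (hw : w ∉ s) :
    coneHomotopy w (bdry K (Finsupp.single s 1)) =
      -((-1 : K) ^ s.card • cone w (bdry K (Finsupp.single s 1))) := by
  simp only [bdry_single, map_sum, map_smul, Finset.smul_sum, ← Finset.sum_neg_distrib]
  refine Finset.sum_congr rfl fun y hy => ?_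
  rw [coneHomotopy_single_of_notMem fun h => hw (Finset.mem_of_mem_erase h), cone_single,
    smul_comm, ← neg_smul, ← Finset.card_erase_add_one hy, pow_succ]
  ring_nf

theorem bdry_coneHomotopy_add {w : Fin n} {u : Finset (Fin n) →₀ K}
    (hu : u ∈ Finsupp.supported K K {s | ∀ x ∈ s, x ≤ w}) :
    bdry K (coneHomotopy w u) + coneHomotopy w (bdry K u) = u := by
  refine Finsupp.eqOn_supported
    (f := (bdry K).comp (coneHomotopy w) + (coneHomotopy w).comp (bdry K))
    (g := LinearMap.id) (fun s hs => ?_) hu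
  simp only [LinearMap.add_apply, LinearMap.comp_apply, LinearMap.id_apply]
  by_cases hw : w ∈ s
  · have hlt : ∀ y ∈ s.erase w, y < w := fun y hy =>
      (hs y (Finset.mem_of_mem_erase hy)).lt_of_ne (Finset.ne_of_mem_erase hy)
    rw [← Finset.insert_erase hw, coneHomotopy_single_of_mem (Finset.mem_insert_self w _),
      map_zero, zero_add, bdry_single_insert hlt, map_add, coneHomotopy_cone, map_smul,
      coneHomotopy_single_of_notMem (Finset.notMem_erase w s), smul_smul, ← pow_add,
      Even.neg_one_pow ⟨_, rfl⟩, one_smul, add_zero]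
  · have hlt : ∀ y ∈ s, y < w := fun y hy => (hs y hy).lt_of_ne (ne_of_mem_of_not_mem hy hw)
    rw [coneHomotopy_single_of_notMem hw, map_smul, bdry_single_insert hlt,
      coneHomotopy_bdry_single hw, smul_add, smul_smul, ← pow_add, Even.neg_one_pow ⟨_, rfl⟩,
      one_smul]
    abel

theorem mem_linkCx_singleton {Δ : Finset (Finset (Fin n))} {v : Fin n} {t : Finset (Fin n)} :
    t ∈ linkCx Δ {v} ↔ v ∉ t ∧ insert v t ∈ Δ := by
  simp [linkCx, Finset.union_singleton]

noncomputable def suspend (v w : Fin n) : (Finset (Fin n) →₀ K) →ₗ[K] (Finset (Fin n) →₀ K) :=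
  cone v - cone w

theorem bdry_suspend {v w : Fin n} (hvw : v < w) {d : ℕ} {y : Finset (Fin n) →₀ K}
    (hy : y ∈ Finsupp.supported K K {t | t.card = d ∧ ∀ x ∈ t, x < v}) :
    bdry K (suspend v w y) = suspend v w (bdry K y) := by
  have hyw : y ∈ Finsupp.supported K K {t | t.card = d ∧ ∀ x ∈ t, x < w} := by
    refine Finsupp.supported_mono ?_ hy
    exact fun t ht => ⟨ht.1, fun x hx => (ht.2 x hx).trans hvw⟩
  simp only [suspend, LinearMap.sub_apply, map_sub, bdry_cone hy, bdry_cone hyw]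
  abel

theorem contract_suspend {v w : Fin n} (hvw : v ≠ w) {y : Finset (Fin n) →₀ K}
    (hy : y ∈ Finsupp.supported K K {t | v ∉ t}) : contract v (suspend v w y) = y := by
  rw [suspend, LinearMap.sub_apply, map_sub, contract_cone_self hy,
    contract_eq_zero (cone_mem_supported_notMem hvw hy), sub_zero]

section Link

variable {Δ : Finset (Finset (Fin n))} {v w : Fin n}

theorem lt_of_mem_linkCx (hv : ∀ s ∈ Δ, v ∈ s → ∀ x ∈ s, x ≤ v) {t : Finset (Fin n)}
    (ht : t ∈ linkCx Δ {v}) : ∀ x ∈ t, x < v := by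
  rw [mem_linkCx_singleton] at ht
  intro x hx
  exact (hv _ ht.2 (Finset.mem_insert_self v t) x (Finset.mem_insert_of_mem hx)).lt_of_ne
    (ne_of_mem_of_not_mem hx ht.1)

theorem insert_mem_of_mem_linkCx (hΔ : IsLowerSet (Δ : Set (Finset (Fin n)))) (hvw : v < w)
    (hv : ∀ s ∈ Δ, v ∈ s → ∀ x ∈ s, x ≤ v)
    (hw : ∀ s ∈ Δ, v ∉ s → insert w s ∈ Δ ∧ ∀ x ∈ s, x ≤ w) {t : Finset (Fin n)}
    (ht : t ∈ linkCx Δ {v}) : insert w t ∈ Δ ∧ w ∉ t := by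
  obtain ⟨hvt, hΔt⟩ := mem_linkCx_singleton.1 ht
  exact ⟨(hw t (hΔ (Finset.subset_insert v t) hΔt) hvt).1,
    fun hwt => (lt_of_mem_linkCx hv ht w hwt).not_gt hvw⟩

theorem contract_mem_degSub {d : ℕ} {u : Finset (Fin n) →₀ K} (hu : u ∈ degSub K Δ (d + 1)) :
    contract v u ∈ degSub K (linkCx Δ {v}) d := by
  rw [degSub_eq_supported] at hu ⊢
  refine contract_mem_supported ?_ hu
  intro s hs hvs
  refine ⟨?_, ?_⟩
  · rw [mem_linkCx_singleton, Finset.insert_erase hvs]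
    exact ⟨Finset.notMem_erase v s, hs.1⟩
  · rw [Finset.card_erase_of_mem hvs, hs.2, Nat.add_sub_cancel]

theorem suspend_mem_degSub (hΔ : IsLowerSet (Δ : Set (Finset (Fin n)))) (hvw : v < w)
    (hv : ∀ s ∈ Δ, v ∈ s → ∀ x ∈ s, x ≤ v)
    (hw : ∀ s ∈ Δ, v ∉ s → insert w s ∈ Δ ∧ ∀ x ∈ s, x ≤ w) {d : ℕ}
    {y : Finset (Fin n) →₀ K} (hy : y ∈ degSub K (linkCx Δ {v}) d) :
    suspend v w y ∈ degSub K Δ (d + 1) := by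
  rw [degSub_eq_supported] at hy ⊢
  refine sub_mem (cone_mem_supported (fun t ht => ?_) hy) (cone_mem_supported (fun t ht => ?_) hy)
  · obtain ⟨hvt, hΔt⟩ := mem_linkCx_singleton.1 ht.1
    exact ⟨hΔt, by rw [Finset.card_insert_of_notMem hvt, ht.2]⟩
  · obtain ⟨hΔt, hwt⟩ := insert_mem_of_mem_linkCx hΔ hvw hv hw ht.1
    exact ⟨hΔt, by rw [Finset.card_insert_of_notMem hwt, ht.2]⟩

theorem bdry_suspend_of_mem_degSub (hvw : v < w) (hv : ∀ s ∈ Δ, v ∈ s → ∀ x ∈ s, x ≤ v)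
    {d : ℕ} {y : Finset (Fin n) →₀ K} (hy : y ∈ degSub K (linkCx Δ {v}) d) :
    bdry K (suspend v w y) = suspend v w (bdry K y) := by
  rw [degSub_eq_supported] at hy
  refine bdry_suspend hvw (d := d) (Finsupp.supported_mono ?_ hy)
  exact fun t ht => ⟨ht.2, lt_of_mem_linkCx hv ht.1⟩

/-- Cycles avoiding `v` lie in the cone with apex `w`, hence bound. -/
theorem mem_map_bdry_of_cycle_of_notMem
    (hw : ∀ s ∈ Δ, v ∉ s → insert w s ∈ Δ ∧ ∀ x ∈ s, x ≤ w) {d : ℕ}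
    {b : Finset (Fin n) →₀ K} (hb : b ∈ Finsupp.supported K K {s | (s ∈ Δ ∧ s.card = d) ∧ v ∉ s})
    (hb_cyc : bdry K b = 0) : b ∈ (degSub K Δ (d + 1)).map (bdry K) := by
  refine ⟨coneHomotopy w b, ?_, ?_⟩
  · rw [degSub_eq_supported]
    refine coneHomotopy_mem_supported ?_ hb
    intro s hs hws
    exact ⟨(hw s hs.1.1 hs.2).1, by rw [Finset.card_insert_of_notMem hws, hs.1.2]⟩
  · have hbw := bdry_coneHomotopy_add
      (Finsupp.supported_mono (fun s hs => (hw s hs.1.1 hs.2).2) hb)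
    rwa [hb_cyc, map_zero, add_zero] at hbw

theorem exists_sub_suspend_mem_map_bdry (hΔ : IsLowerSet (Δ : Set (Finset (Fin n))))
    (hvw : v < w) (hv : ∀ s ∈ Δ, v ∈ s → ∀ x ∈ s, x ≤ v)
    (hw : ∀ s ∈ Δ, v ∉ s → insert w s ∈ Δ ∧ ∀ x ∈ s, x ≤ w) {c : ℕ}
    {ζ : Finset (Fin n) →₀ K} (hζ : ζ ∈ degSub K Δ (c + 1)) (hζ_cyc : bdry K ζ = 0) :
    ∃ a ∈ degSub K (linkCx Δ {v}) c ⊓ LinearMap.ker (bdry K),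
      ζ - suspend v w a ∈ (degSub K Δ (c + 1 + 1)).map (bdry K) := by
  set a := contract v ζ
  have ha : a ∈ degSub K (linkCx Δ {v}) c := contract_mem_degSub hζ
  rw [degSub_eq_supported] at hζ
  have ha_cyc : bdry K a = 0 := by
    rw [← contract_bdry (Finsupp.supported_mono (fun s hs => hv s hs.1) hζ), hζ_cyc, map_zero]
  refine ⟨a, ⟨ha, ha_cyc⟩, mem_map_bdry_of_cycle_of_notMem hw ?_ ?_⟩
  · have hsplit : ζ - suspend v w a = (ζ - cone v a) + cone w a := by
      rw [suspend, LinearMap.sub_apply]; abel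
    rw [degSub_eq_supported] at ha
    refine hsplit ▸ add_mem (sub_cone_contract_mem_supported hζ)
      (cone_mem_supported (fun t ht => ?_) ha)
    obtain ⟨hΔt, hwt⟩ := insert_mem_of_mem_linkCx hΔ hvw hv hw ht.1
    refine ⟨⟨hΔt, by rw [Finset.card_insert_of_notMem hwt, ht.2]⟩, fun hvt => ?_⟩
    exact (mem_linkCx_singleton.1 ht.1).1 ((Finset.mem_insert.1 hvt).resolve_left hvw.ne)
  · rw [map_sub, hζ_cyc, bdry_suspend_of_mem_degSub hvw hv ha, ha_cyc, map_zero, sub_zero]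

variable (K) in
theorem nonempty_homologyLevel_link_equiv (hΔ : IsLowerSet (Δ : Set (Finset (Fin n))))
    (hvw : v < w) (hv : ∀ s ∈ Δ, v ∈ s → ∀ x ∈ s, x ≤ v)
    (hw : ∀ s ∈ Δ, v ∉ s → insert w s ∈ Δ ∧ ∀ x ∈ s, x ≤ w) (c : ℕ) :
    Nonempty (homologyLevel K (linkCx Δ {v}) c ≃ₗ[K] homologyLevel K Δ (c + 1)) := by
  refine nonempty_quotMod_equiv K (suspend v w) ?_ ?_ ?_
  · rintro z ⟨hz, hz_cyc⟩
    refine ⟨suspend_mem_degSub hΔ hvw hv hw hz, ?_⟩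
    change bdry K (suspend v w z) = 0
    rw [bdry_suspend_of_mem_degSub hvw hv hz, LinearMap.mem_ker.1 hz_cyc, map_zero]
  · rintro z ⟨hz, -⟩
    constructor
    · rintro ⟨u, hu, hu_bdry⟩
      refine ⟨contract v u, contract_mem_degSub hu, ?_⟩
      rw [degSub_eq_supported] at hu hz
      rw [← contract_bdry (Finsupp.supported_mono (fun s hs => hv s hs.1) hu), hu_bdry,
        contract_suspend hvw.ne (Finsupp.supported_mono
          (fun t ht => (mem_linkCx_singleton.1 ht.1).1) hz)]
    · rintro ⟨y, hy, rfl⟩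
      exact ⟨suspend v w y, suspend_mem_degSub hΔ hvw hv hw hy,
        bdry_suspend_of_mem_degSub hvw hv hy⟩
  · rintro ζ ⟨hζ, hζ_cyc⟩
    exact exists_sub_suspend_mem_map_bdry hΔ hvw hv hw hζ hζ_cyc

end Link

theorem bdry_lmapDomain_map {m : ℕ} (e : Fin m ↪o Fin n) (u : Finset (Fin m) →₀ K) :
    bdry K (Finsupp.lmapDomain K K (Finset.map e.toEmbedding) u) =
      Finsupp.lmapDomain K K (Finset.map e.toEmbedding) (bdry K u) := by
  have hcomm : (bdry K).comp (Finsupp.lmapDomain K K (Finset.map e.toEmbedding)) =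
      (Finsupp.lmapDomain K K (Finset.map e.toEmbedding)).comp (bdry K) := by
    refine Finsupp.lhom_ext' fun s => LinearMap.ext_ring ?_
    simp only [LinearMap.comp_apply, Finsupp.lsingle_apply, Finsupp.lmapDomain_apply,
      Finsupp.mapDomain_single, bdry_single, Finset.sum_map, Finsupp.mapDomain_finsetSum,
      Finsupp.mapDomain_smul]
    refine Finset.sum_congr rfl fun x _ => ?_
    rw [Finset.filter_map, Finset.card_map, ← Finset.map_erase]
    simp
  exact LinearMap.congr_fun hcomm u

variable (K) in
theorem nonempty_homologyLevel_image_equiv {m : ℕ} (Λ : Finset (Finset (Fin m)))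
    (e : Fin m ↪o Fin n) (c : ℕ) :
    Nonempty (homologyLevel K Λ c ≃ₗ[K]
      homologyLevel K (Λ.image (Finset.map e.toEmbedding)) c) := by
  set φ := Finsupp.lmapDomain K K (Finset.map e.toEmbedding)
  have hφ_inj : Function.Injective φ := Finsupp.mapDomain_injective (Finset.map_injective _)
  have hφ_bdry : ∀ u, bdry K (φ u) = φ (bdry K u) := bdry_lmapDomain_map e
  have hφ_degSub : ∀ d, (degSub K Λ d).map φ = degSub K (Λ.image (Finset.map e.toEmbedding)) d := by
    intro d
    rw [degSub_eq_supported, degSub_eq_supported, Finsupp.lmapDomain_supported]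
    congr 1
    ext t
    simp only [Set.mem_image, Set.mem_ofPred_eq, Finset.mem_image]
    constructor
    · rintro ⟨s, ⟨hs, rfl⟩, rfl⟩
      exact ⟨⟨s, hs, rfl⟩, Finset.card_map _⟩
    · rintro ⟨⟨s, hs, rfl⟩, hcard⟩
      exact ⟨s, ⟨hs, by rwa [Finset.card_map] at hcard⟩, rfl⟩
  refine nonempty_quotMod_equiv K φ ?_ ?_ ?_
  · rintro z ⟨hz, hz_cyc⟩
    refine ⟨hφ_degSub c ▸ ⟨z, hz, rfl⟩, ?_⟩
    change bdry K (φ z) = 0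
    rw [hφ_bdry, LinearMap.mem_ker.1 hz_cyc, map_zero]
  · rintro z -
    constructor
    · rintro ⟨u', hu', hu'_bdry⟩
      rw [← hφ_degSub] at hu'
      obtain ⟨u, hu, rfl⟩ := hu'
      exact ⟨u, hu, hφ_inj ((hφ_bdry u).symm.trans hu'_bdry)⟩
    · rintro ⟨u, hu, rfl⟩
      exact ⟨φ u, hφ_degSub _ ▸ ⟨u, hu, rfl⟩, hφ_bdry u⟩
  · rintro ζ ⟨hζ, hζ_cyc⟩
    rw [← hφ_degSub] at hζ
    obtain ⟨z, hz, rfl⟩ := hζ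
    refine ⟨z, ⟨hz, hφ_inj ?_⟩, by simp⟩
    rw [map_zero, ← LinearMap.mem_ker.1 hζ_cyc]
    exact (hφ_bdry z).symm

theorem mem_indepCx {G : SimpleGraph (Fin n)} {s : Finset (Fin n)} :
    s ∈ indepCx G ↔ ∀ i ∈ s, ∀ j ∈ s, ¬ G.Adj i j := by
  simp [indepCx]

theorem isLowerSet_indepCx (G : SimpleGraph (Fin n)) :
    IsLowerSet (indepCx G : Set (Finset (Fin n))) := fun _ _ hts hs =>
  mem_indepCx.2 fun i hi j hj => mem_indepCx.1 hs i (hts hi) j (hts hj)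

theorem insert_mem_indepCx {G : SimpleGraph (Fin n)} {a : Fin n} {s : Finset (Fin n)} :
    insert a s ∈ indepCx G ↔ s ∈ indepCx G ∧ ∀ x ∈ s, ¬ G.Adj a x := by
  simp only [mem_indepCx, Finset.forall_mem_insert, G.irrefl, not_false_eq_true, true_and]
  constructor
  · exact fun h => ⟨fun i hi => (h.2 i hi).2, h.1⟩
  · exact fun h => ⟨h.2, fun i hi => ⟨fun hadj => h.2 i hi hadj.symm, h.1 i hi⟩⟩

theorem mem_image_indepCx_pathGraph {m : ℕ} (h : m ≤ n) {t : Finset (Fin n)} :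
    t ∈ (indepCx (pathGraph m)).image (Finset.map (Fin.castLEOrderEmb h).toEmbedding) ↔
      t ∈ indepCx (pathGraph n) ∧ ∀ x ∈ t, (x : ℕ) < m := by
  have hmap : ∀ s : Finset (Fin m), s.map (Fin.castLEOrderEmb h).toEmbedding ∈
      indepCx (pathGraph n) ↔ s ∈ indepCx (pathGraph m) := fun s => by
    simp [mem_indepCx, pathGraph_adj, Fin.castLEOrderEmb]
  constructor
  · intro ht
    obtain ⟨s, hs, rfl⟩ := Finset.mem_image.1 ht
    refine ⟨(hmap s).2 hs, fun x hx => ?_⟩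
    obtain ⟨y, -, rfl⟩ := Finset.mem_map.1 hx
    exact y.isLt
  · rintro ⟨ht, hlt⟩
    obtain ⟨s, -, rfl⟩ := (Finset.subset_map_iff (f := (Fin.castLEOrderEmb h).toEmbedding)
      (t := Finset.univ)).1 fun x hx =>
      Finset.mem_map.2 ⟨⟨x, hlt x hx⟩, Finset.mem_univ _, rfl⟩
    exact Finset.mem_image_of_mem _ ((hmap s).1 ht)

theorem mem_linkCx_indepCx_pathGraph {m : ℕ} {t : Finset (Fin (m + 3))} :
    t ∈ linkCx (indepCx (pathGraph (m + 3))) {⟨m + 1, by omega⟩} ↔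
      t ∈ indepCx (pathGraph (m + 3)) ∧ ∀ x ∈ t, (x : ℕ) < m := by
  have hfar : ∀ x : Fin (m + 3), (x ≠ ⟨m + 1, by omega⟩ ∧
      ¬ (pathGraph (m + 3)).Adj ⟨m + 1, by omega⟩ x) ↔ (x : ℕ) < m := fun x => by
    simp only [pathGraph_adj, Ne, Fin.ext_iff]
    omega
  rw [mem_linkCx_singleton, insert_mem_indepCx]
  constructor
  · rintro ⟨hvt, ht, hadj⟩
    exact ⟨ht, fun x hx => (hfar x).1 ⟨ne_of_mem_of_not_mem hx hvt, hadj x hx⟩⟩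
  · rintro ⟨ht, hlt⟩
    exact ⟨fun hv => ((hfar _).2 (hlt _ hv)).1 rfl, ht, fun x hx => ((hfar x).2 (hlt x hx)).2⟩

theorem linkCx_indepCx_pathGraph (m : ℕ) :
    linkCx (indepCx (pathGraph (m + 3))) {⟨m + 1, by omega⟩} =
      (indepCx (pathGraph m)).image
        (Finset.map (Fin.castLEOrderEmb (Nat.le_add_right m 3)).toEmbedding) := by
  ext t
  rw [mem_linkCx_indepCx_pathGraph, mem_image_indepCx_pathGraph]

variable (K) in
theorem nonempty_homologyLevel_pathGraph_equiv (m c : ℕ) :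
    Nonempty (homologyLevel K ((indepCx (pathGraph m)).image
        (Finset.map (Fin.castLEOrderEmb (Nat.le_add_right m 3)).toEmbedding)) c ≃ₗ[K]
      homologyLevel K (indepCx (pathGraph (m + 3))) (c + 1)) := by
  rw [← linkCx_indepCx_pathGraph]
  refine nonempty_homologyLevel_link_equiv K (w := ⟨m + 2, by omega⟩) (isLowerSet_indepCx _)
    (by simp [Fin.lt_def]) (fun s hs hv x hx => ?_) (fun s hs hv => ⟨?_, fun x _ => ?_⟩) c
  · have hnadj := mem_indepCx.1 hs _ hv x hx
    simp only [pathGraph_adj] at hnadj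
    simp only [Fin.le_def]
    omega
  · refine insert_mem_indepCx.2 ⟨hs, fun x hx hadj => hv ?_⟩
    simp only [pathGraph_adj] at hadj
    rwa [show x = ⟨m + 1, by omega⟩ from Fin.ext (show (x : ℕ) = m + 1 by omega)] at hx
  · simp only [Fin.le_def]
    omega

end SimplicialChains

open SimplicialChains

/-- For `n ≥ 4` and `i ≥ 1`, the reduced homology of the clique complex
`Δ_n = Δ(P_nᶜ)` of the complement of the path satisfies
`H̃_i(Δ_n; K) ≅ H̃_{i-1}(Δ_{n-3}; K)`. -/
theorem reducedHomology_path_compl_rec (n i : ℕ) (hn : 4 ≤ n) (hi : 1 ≤ i) :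
    Nonempty (reducedHomology K (indepCx (pathGraph n)) i ≃ₗ[K]
      reducedHomology K (indepCx (pathGraph (n - 3))) (i - 1)) := by
  obtain ⟨m, rfl⟩ : ∃ m, n = m + 3 := ⟨n - 3, by omega⟩
  obtain ⟨j, rfl⟩ : ∃ j, i = j + 1 := ⟨i - 1, by omega⟩
  obtain ⟨e₁⟩ := nonempty_homologyLevel_image_equiv K (indepCx (pathGraph m))
    (Fin.castLEOrderEmb (Nat.le_add_right m 3)) (j + 1)
  obtain ⟨e₂⟩ := nonempty_homologyLevel_pathGraph_equiv K m (j + 1)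
  exact ⟨(e₁.trans e₂).symm⟩
end

section
/- dim_K H̃_{k-1}(Δ_{3k}; K) = 1 and dim_K H̃_{k-1}(Δ_{3k-1}; K) = 1, where Δ_n is the clique complex of the complement of the path P_n; consequently β_{k,3k}(J(P_{3k})) = 1 = β_{k,3k-1}(J(P_{3k-1})). -/
open Finset

attribute [local instance] Classical.propDecidable

variable (K : Type) [Field K]

variable {n : ℕ}

open SimpleGraph

/-!
In `P_{n+3}` the vertex `leaf n = n + 2` hangs off `stem n = n + 1`. A face of `Δ_{n+3}` through
the stem is `G ∪ {stem}` with `G` a face of `Δ_n`, and adding the leaf to a face avoiding the stem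
gives a face. Hence the suspension `σ G = G ∪ {stem} - G ∪ {leaf}` is a chain map
`C(Δ_n) → C(Δ_{n+3})` raising degree by one, with left inverse `π (G ∪ {stem}) = G`, and
`h F = (-1)^|F| F ∪ {leaf}` (for `F` avoiding stem and leaf) satisfies `∂h + h∂ = id - σπ` on
`C(Δ_{n+3})`. So `H̃_{i+1}(Δ_{n+3}) ≅ H̃_i(Δ_n)`, and the claim follows from
`H̃_{-1}(Δ_0) = K` and `H̃_0(Δ_2) = K`. For the Betti numbers, Hochster's formula in degree `n`
only sees the empty face, whose link is `Δ_n` itself.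
-/

lemma neg_one_pow_smul_neg_one_pow_smul {R M : Type*} [Ring R] [AddCommGroup M] [Module R M]
    (m : ℕ) (x : M) : (-1 : R) ^ m • (-1 : R) ^ m • x = x := by
  rw [smul_smul, ← pow_add, Even.neg_one_pow ⟨m, rfl⟩, one_smul]

lemma bdry_single (s : Finset (Fin n)) :
    bdry K (Finsupp.single s 1) =
      ∑ v ∈ s, (-1 : K) ^ (s.filter (· < v)).card • Finsupp.single (s.erase v) (1 : K) := by
  simp [bdry]

lemma bdry_single_insert_of_forall_lt {w : Fin n} {s : Finset (Fin n)} (hw : ∀ x ∈ s, x < w) :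
    bdry K (Finsupp.single (insert w s) 1) =
      (-1 : K) ^ s.card • Finsupp.single s 1 +
        ∑ v ∈ s, (-1 : K) ^ (s.filter (· < v)).card •
          Finsupp.single (insert w (s.erase v)) 1 := by
  have hws : w ∉ s := fun h => lt_irrefl w (hw w h)
  rw [bdry_single, sum_insert hws, erase_insert hws, filter_insert, if_neg (lt_irrefl w),
    filter_true_of_mem hw]
  congr 1
  refine sum_congr rfl fun v hv => ?_
  rw [erase_insert_of_ne (hw v hv).ne', filter_insert, if_neg (hw v hv).asymm]

lemma mem_indepCx {G : SimpleGraph (Fin n)} {s : Finset (Fin n)} :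
    s ∈ indepCx G ↔ ∀ i ∈ s, ∀ j ∈ s, ¬ G.Adj i j := by
  simp [indepCx]

lemma insert_mem_indepCx {G : SimpleGraph (Fin n)} {s : Finset (Fin n)} {v : Fin n}
    (hs : s ∈ indepCx G) (hv : ∀ u ∈ s, ¬ G.Adj v u) : insert v s ∈ indepCx G := by
  rw [mem_indepCx] at hs ⊢
  simp only [mem_insert, forall_eq_or_imp, G.irrefl, not_false_eq_true, true_and]
  exact ⟨hv, fun u hu => ⟨fun h => hv u hu h.symm, hs u hu⟩⟩

def stem (n : ℕ) : Fin (n + 3) := ⟨n + 1, by omega⟩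

def leaf (n : ℕ) : Fin (n + 3) := ⟨n + 2, by omega⟩

def liftFace (G : Finset (Fin n)) : Finset (Fin (n + 3)) := G.map (Fin.castAddEmb 3)

def stemJoin (G : Finset (Fin n)) : Finset (Fin (n + 3)) := insert (stem n) (liftFace G)

def leafJoin (G : Finset (Fin n)) : Finset (Fin (n + 3)) := insert (leaf n) (liftFace G)

lemma val_lt_of_mem_liftFace {G : Finset (Fin n)} {x : Fin (n + 3)} (hx : x ∈ liftFace G) :
    (x : ℕ) < n := by
  obtain ⟨y, -, rfl⟩ := mem_map.1 hx
  exact y.isLt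

lemma lt_stem_of_mem_liftFace {G : Finset (Fin n)} {x : Fin (n + 3)} (hx : x ∈ liftFace G) :
    x < stem n := by
  have := val_lt_of_mem_liftFace hx
  show (x : ℕ) < n + 1
  omega

lemma lt_leaf_of_ne {x : Fin (n + 3)} (hx : x ≠ leaf n) : x < leaf n := by
  have : (x : ℕ) ≠ n + 2 := fun h => hx (Fin.ext h)
  show (x : ℕ) < n + 2
  omega

lemma stem_notMem_liftFace (G : Finset (Fin n)) : stem n ∉ liftFace G :=
  fun h => lt_irrefl _ (lt_stem_of_mem_liftFace h)

lemma leaf_notMem_liftFace (G : Finset (Fin n)) : leaf n ∉ liftFace G := fun h => by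
  have := val_lt_of_mem_liftFace h
  simp only [leaf] at this
  omega

lemma stem_ne_leaf : stem n ≠ leaf n := by
  simp [stem, leaf, Fin.ext_iff]

lemma card_liftFace (G : Finset (Fin n)) : (liftFace G).card = G.card := card_map _

lemma stemJoin_injective : Function.Injective (stemJoin (n := n)) := fun G G' h => by
  have := congrArg (fun s => s.erase (stem n)) h
  simp only [stemJoin, erase_insert (stem_notMem_liftFace _)] at this
  exact map_injective _ this

lemma stem_mem_stemJoin (G : Finset (Fin n)) : stem n ∈ stemJoin G := mem_insert_self _ _

lemma bdry_single_insert_liftFace {w : Fin (n + 3)} (G : Finset (Fin n))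
    (hw : ∀ x ∈ liftFace G, x < w) :
    bdry K (Finsupp.single (insert w (liftFace G)) 1) =
      (-1 : K) ^ G.card • Finsupp.single (liftFace G) 1 +
        ∑ v ∈ G, (-1 : K) ^ (G.filter (· < v)).card •
          Finsupp.single (insert w (liftFace (G.erase v))) 1 := by
  rw [bdry_single_insert_of_forall_lt K hw, card_liftFace, liftFace, sum_map]
  congr 1
  refine sum_congr rfl fun v _ => ?_
  rw [filter_map, card_map, ← map_erase]
  rfl

lemma liftFace_mem_indepCx {G : Finset (Fin n)} (hG : G ∈ indepCx (pathGraph n)) :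
    liftFace G ∈ indepCx (pathGraph (n + 3)) := by
  rw [mem_indepCx] at hG ⊢
  simp only [liftFace, mem_map, Fin.coe_castAddEmb]
  rintro _ ⟨i, hi, rfl⟩ _ ⟨j, hj, rfl⟩
  simpa [pathGraph_adj] using hG i hi j hj

lemma stemJoin_mem_indepCx {G : Finset (Fin n)} (hG : G ∈ indepCx (pathGraph n)) :
    stemJoin G ∈ indepCx (pathGraph (n + 3)) :=
  insert_mem_indepCx (liftFace_mem_indepCx hG) fun u hu => by
    have := val_lt_of_mem_liftFace hu
    simp only [pathGraph_adj, stem]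
    omega

lemma insert_leaf_mem_indepCx {F : Finset (Fin (n + 3))} (hF : F ∈ indepCx (pathGraph (n + 3)))
    (hstem : stem n ∉ F) : insert (leaf n) F ∈ indepCx (pathGraph (n + 3)) :=
  insert_mem_indepCx hF fun u hu hadj => by
    have : u = stem n := by
      rw [pathGraph_adj] at hadj
      ext
      simp only [leaf, stem] at hadj ⊢
      omega
    exact hstem (this ▸ hu)

lemma leafJoin_mem_indepCx {G : Finset (Fin n)} (hG : G ∈ indepCx (pathGraph n)) :
    leafJoin G ∈ indepCx (pathGraph (n + 3)) :=
  insert_leaf_mem_indepCx (liftFace_mem_indepCx hG) (stem_notMem_liftFace G)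

-- A face through the stem avoids its neighbours `n` and `leaf n`, so the rest of it lies in
-- `Fin n`.
lemma exists_eq_stemJoin {F : Finset (Fin (n + 3))} (hF : F ∈ indepCx (pathGraph (n + 3)))
    (hstem : stem n ∈ F) : ∃ G ∈ indepCx (pathGraph n), F = stemJoin G := by
  rw [mem_indepCx] at hF
  have hlt : ∀ x ∈ F, x ≠ stem n → (x : ℕ) < n := fun x hx hne => by
    have hadj := hF x hx _ hstem
    have : (x : ℕ) ≠ n + 1 := fun h => hne (Fin.ext h)
    simp only [pathGraph_adj, stem] at hadj
    omega
  refine ⟨univ.filter fun y => Fin.castAdd 3 y ∈ F, ?_, ?_⟩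
  · rw [mem_indepCx]
    intro i hi j hj hij
    simp only [mem_filter, mem_univ, true_and] at hi hj
    exact hF _ hi _ hj (by simpa [pathGraph_adj] using hij)
  · ext x
    by_cases hx : x = stem n
    · simp [hx, hstem, stemJoin]
    · simp only [stemJoin, liftFace, mem_insert, hx, false_or, mem_map, mem_filter, mem_univ,
        true_and, Fin.coe_castAddEmb]
      constructor
      · intro hxF
        exact ⟨⟨x, hlt x hxF hx⟩, hxF, rfl⟩
      · rintro ⟨y, hy, rfl⟩
        exact hy

noncomputable def suspChain : (Finset (Fin n) →₀ K) →ₗ[K] (Finset (Fin (n + 3)) →₀ K) :=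
  Finsupp.lmapDomain K K stemJoin - Finsupp.lmapDomain K K leafJoin

noncomputable def desuspChain :
    (Finset (Fin (n + 3)) →₀ K) →ₗ[K] (Finset (Fin n) →₀ K) :=
  Finsupp.lcomapDomain stemJoin stemJoin_injective

noncomputable def suspHomotopy :
    (Finset (Fin (n + 3)) →₀ K) →ₗ[K] (Finset (Fin (n + 3)) →₀ K) :=
  Finsupp.lsum K fun F => LinearMap.toSpanSingleton K _
    (if stem n ∉ F ∧ leaf n ∉ F then
      (-1 : K) ^ F.card • Finsupp.single (insert (leaf n) F) 1
    else 0)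

lemma suspChain_single (G : Finset (Fin n)) :
    suspChain K (Finsupp.single G 1) =
      Finsupp.single (stemJoin G) 1 - Finsupp.single (leafJoin G) 1 := by
  simp [suspChain]

lemma desuspChain_single_stemJoin (G : Finset (Fin n)) :
    desuspChain K (Finsupp.single (stemJoin G) 1) = Finsupp.single G 1 := by
  simp [desuspChain]

lemma desuspChain_single_of_stem_notMem {F : Finset (Fin (n + 3))} (hF : stem n ∉ F) :
    desuspChain K (Finsupp.single F 1) = 0 := by
  refine Finsupp.comapDomain_single_of_not_mem_range ?_ _ _
  rintro ⟨G, rfl⟩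
  exact hF (stem_mem_stemJoin G)

lemma stem_notMem_leafJoin (G : Finset (Fin n)) : stem n ∉ leafJoin G :=
  mem_insert.not.2 (not_or.2 ⟨stem_ne_leaf, stem_notMem_liftFace G⟩)

lemma suspHomotopy_single {F : Finset (Fin (n + 3))} (hs : stem n ∉ F) (hl : leaf n ∉ F) :
    suspHomotopy K (Finsupp.single F 1) =
      (-1 : K) ^ F.card • Finsupp.single (insert (leaf n) F) 1 := by
  simp [suspHomotopy, hs, hl]

lemma suspHomotopy_single_of_mem {F : Finset (Fin (n + 3))} (h : stem n ∈ F ∨ leaf n ∈ F) :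
    suspHomotopy K (Finsupp.single F 1) = 0 := by
  simp [suspHomotopy, or_iff_not_and_not.1 h]

lemma desuspChain_comp_suspChain :
    desuspChain K ∘ₗ suspChain K (n := n) = LinearMap.id :=
  Finsupp.lhom_ext' fun G => LinearMap.ext_ring <| by
    simp only [LinearMap.comp_apply, Finsupp.lsingle_apply, suspChain_single, map_sub,
      desuspChain_single_stemJoin, desuspChain_single_of_stem_notMem K (stem_notMem_leafJoin G),
      sub_zero, LinearMap.id_apply]

lemma bdry_comp_suspChain : bdry K ∘ₗ suspChain K (n := n) = suspChain K ∘ₗ bdry K :=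
  Finsupp.lhom_ext' fun G => LinearMap.ext_ring <| by
    simp only [LinearMap.comp_apply, Finsupp.lsingle_apply, suspChain_single, map_sub,
      stemJoin, leafJoin, bdry_single_insert_liftFace K G (fun _ => lt_stem_of_mem_liftFace),
      bdry_single_insert_liftFace K G (fun x hx => lt_leaf_of_ne
        (ne_of_mem_of_not_mem hx (leaf_notMem_liftFace G))),
      bdry_single, map_sum, map_smul, add_sub_add_left_eq_sub, ← sum_sub_distrib, smul_sub]

lemma desuspChain_bdry_single_of_stem_notMem {F : Finset (Fin (n + 3))} (hF : stem n ∉ F) :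
    desuspChain K (bdry K (Finsupp.single F 1)) = bdry K (desuspChain K (Finsupp.single F 1)) := by
  rw [desuspChain_single_of_stem_notMem K hF, map_zero, bdry_single, map_sum]
  exact sum_eq_zero fun v _ => by
    rw [map_smul, desuspChain_single_of_stem_notMem K fun h => hF (mem_of_mem_erase h), smul_zero]

lemma desuspChain_bdry_single_stemJoin (G : Finset (Fin n)) :
    desuspChain K (bdry K (Finsupp.single (stemJoin G) 1)) =
      bdry K (desuspChain K (Finsupp.single (stemJoin G) 1)) := by
  rw [stemJoin, bdry_single_insert_liftFace K G fun _ => lt_stem_of_mem_liftFace, map_add,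
    map_smul, desuspChain_single_of_stem_notMem K (stem_notMem_liftFace G), smul_zero, zero_add,
    ← stemJoin, desuspChain_single_stemJoin, bdry_single, map_sum]
  exact sum_congr rfl fun v _ => by rw [map_smul, ← stemJoin, desuspChain_single_stemJoin]

lemma desuspChain_bdry_single {F : Finset (Fin (n + 3))} (hF : F ∈ indepCx (pathGraph (n + 3))) :
    desuspChain K (bdry K (Finsupp.single F 1)) = bdry K (desuspChain K (Finsupp.single F 1)) := by
  by_cases hstem : stem n ∈ F
  · obtain ⟨G, -, rfl⟩ := exists_eq_stemJoin hF hstem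
    exact desuspChain_bdry_single_stemJoin K G
  · exact desuspChain_bdry_single_of_stem_notMem K hstem

lemma suspHomotopy_spec_single_stemJoin (G : Finset (Fin n)) :
    bdry K (suspHomotopy K (Finsupp.single (stemJoin G) 1)) +
        suspHomotopy K (bdry K (Finsupp.single (stemJoin G) 1)) =
      Finsupp.single (stemJoin G) 1 -
        suspChain K (desuspChain K (Finsupp.single (stemJoin G) 1)) := by
  have hzero : ∀ D, suspHomotopy K (Finsupp.single (insert (stem n) D) 1) = 0 :=
    fun D => suspHomotopy_single_of_mem K (Or.inl (mem_insert_self _ _))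
  rw [stemJoin, hzero, map_zero, zero_add, ← stemJoin, desuspChain_single_stemJoin,
    suspChain_single, sub_sub_cancel, stemJoin,
    bdry_single_insert_liftFace K G fun _ => lt_stem_of_mem_liftFace, map_add, map_sum, map_smul,
    suspHomotopy_single K (stem_notMem_liftFace G) (leaf_notMem_liftFace G), card_liftFace,
    neg_one_pow_smul_neg_one_pow_smul]
  simp only [map_smul, hzero, smul_zero, sum_const_zero, add_zero, leafJoin]

lemma suspHomotopy_spec_single_insert_leaf {E : Finset (Fin (n + 3))} (hs : stem n ∉ E)
    (hl : leaf n ∉ E) :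
    bdry K (suspHomotopy K (Finsupp.single (insert (leaf n) E) 1)) +
        suspHomotopy K (bdry K (Finsupp.single (insert (leaf n) E) 1)) =
      Finsupp.single (insert (leaf n) E) 1 -
        suspChain K (desuspChain K (Finsupp.single (insert (leaf n) E) 1)) := by
  have hzero : ∀ D, suspHomotopy K (Finsupp.single (insert (leaf n) D) 1) = 0 :=
    fun D => suspHomotopy_single_of_mem K (Or.inr (mem_insert_self _ _))
  have hlt : ∀ x ∈ E, x < leaf n := fun x hx => lt_leaf_of_ne (ne_of_mem_of_not_mem hx hl)
  rw [hzero, map_zero, zero_add, desuspChain_single_of_stem_notMem K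
      (mem_insert.not.2 (not_or.2 ⟨stem_ne_leaf, hs⟩)), map_zero, sub_zero,
    bdry_single_insert_of_forall_lt K hlt, map_add, map_sum, map_smul, suspHomotopy_single K hs hl,
    neg_one_pow_smul_neg_one_pow_smul]
  simp only [map_smul, hzero, smul_zero, sum_const_zero, add_zero]

lemma suspHomotopy_spec_single_of_notMem {F : Finset (Fin (n + 3))} (hs : stem n ∉ F)
    (hl : leaf n ∉ F) :
    bdry K (suspHomotopy K (Finsupp.single F 1)) + suspHomotopy K (bdry K (Finsupp.single F 1)) =
      Finsupp.single F 1 - suspChain K (desuspChain K (Finsupp.single F 1)) := by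
  have hlt : ∀ x ∈ F, x < leaf n := fun x hx => lt_leaf_of_ne (ne_of_mem_of_not_mem hx hl)
  have hcancel : ∀ v ∈ F,
      (-1 : K) ^ F.card • (-1 : K) ^ (F.filter (· < v)).card •
          Finsupp.single (insert (leaf n) (F.erase v)) 1 +
        suspHomotopy K ((-1 : K) ^ (F.filter (· < v)).card • Finsupp.single (F.erase v) 1) =
          0 := by
    intro v hv
    obtain ⟨m, hm⟩ : ∃ m, F.card = m + 1 :=
      ⟨F.card - 1, by have := card_pos.2 ⟨v, hv⟩; omega⟩
    rw [map_smul, suspHomotopy_single K (fun h => hs (mem_of_mem_erase h))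
      (fun h => hl (mem_of_mem_erase h)), card_erase_of_mem hv, hm, Nat.add_sub_cancel,
      smul_smul, smul_smul, ← add_smul]
    rw [show (-1 : K) ^ (m + 1) * (-1) ^ (F.filter (· < v)).card +
        (-1) ^ (F.filter (· < v)).card * (-1) ^ m = 0 by ring, zero_smul]
  rw [desuspChain_single_of_stem_notMem K hs, map_zero, sub_zero, suspHomotopy_single K hs hl,
    map_smul, bdry_single_insert_of_forall_lt K hlt, bdry_single, map_sum, smul_add,
    neg_one_pow_smul_neg_one_pow_smul, smul_sum, add_assoc,
    ← sum_add_distrib, sum_eq_zero hcancel, add_zero]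

lemma suspHomotopy_spec_single {F : Finset (Fin (n + 3))} (hF : F ∈ indepCx (pathGraph (n + 3))) :
    bdry K (suspHomotopy K (Finsupp.single F 1)) + suspHomotopy K (bdry K (Finsupp.single F 1)) =
      Finsupp.single F 1 - suspChain K (desuspChain K (Finsupp.single F 1)) := by
  by_cases hs : stem n ∈ F
  · obtain ⟨G, -, rfl⟩ := exists_eq_stemJoin hF hs
    exact suspHomotopy_spec_single_stemJoin K G
  by_cases hl : leaf n ∈ F
  · rw [← insert_erase hl]
    exact suspHomotopy_spec_single_insert_leaf K (fun h => hs (mem_of_mem_erase h))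
      (notMem_erase _ _)
  · exact suspHomotopy_spec_single_of_notMem K hs hl

lemma suspChain_mem_degSub {c : ℕ} {x : Finset (Fin n) →₀ K}
    (hx : x ∈ degSub K (indepCx (pathGraph n)) c) :
    suspChain K x ∈ degSub K (indepCx (pathGraph (n + 3))) (c + 1) := by
  refine (Submodule.map_span_le _ _ _).2 ?_ (Submodule.mem_map_of_mem hx)
  rintro _ ⟨G, hG, hc, rfl⟩
  rw [suspChain_single]
  refine sub_mem (Submodule.subset_span ⟨_, stemJoin_mem_indepCx hG, ?_, rfl⟩)
    (Submodule.subset_span ⟨_, leafJoin_mem_indepCx hG, ?_, rfl⟩)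
  · rw [stemJoin, card_insert_of_notMem (stem_notMem_liftFace G), card_liftFace, hc]
  · rw [leafJoin, card_insert_of_notMem (leaf_notMem_liftFace G), card_liftFace, hc]

lemma desuspChain_mem_degSub {c : ℕ} {x : Finset (Fin (n + 3)) →₀ K}
    (hx : x ∈ degSub K (indepCx (pathGraph (n + 3))) (c + 1)) :
    desuspChain K x ∈ degSub K (indepCx (pathGraph n)) c := by
  refine (Submodule.map_span_le _ _ _).2 ?_ (Submodule.mem_map_of_mem hx)
  rintro _ ⟨F, hF, hc, rfl⟩
  by_cases hs : stem n ∈ F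
  · obtain ⟨G, hG, rfl⟩ := exists_eq_stemJoin hF hs
    rw [stemJoin, card_insert_of_notMem (stem_notMem_liftFace G), card_liftFace] at hc
    rw [desuspChain_single_stemJoin]
    exact Submodule.subset_span ⟨G, hG, by omega, rfl⟩
  · rw [desuspChain_single_of_stem_notMem K hs]
    exact zero_mem _

lemma suspHomotopy_mem_degSub {c : ℕ} {x : Finset (Fin (n + 3)) →₀ K}
    (hx : x ∈ degSub K (indepCx (pathGraph (n + 3))) c) :
    suspHomotopy K x ∈ degSub K (indepCx (pathGraph (n + 3))) (c + 1) := by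
  refine (Submodule.map_span_le _ _ _).2 ?_ (Submodule.mem_map_of_mem hx)
  rintro _ ⟨F, hF, hc, rfl⟩
  by_cases h : stem n ∈ F ∨ leaf n ∈ F
  · rw [suspHomotopy_single_of_mem K h]
    exact zero_mem _
  · obtain ⟨hs, hl⟩ := not_or.1 h
    rw [suspHomotopy_single K hs hl]
    exact Submodule.smul_mem _ _ (Submodule.subset_span
      ⟨_, insert_leaf_mem_indepCx hF hs, by rw [card_insert_of_notMem hl, hc], rfl⟩)

lemma desuspChain_bdry_of_mem_degSub {c : ℕ} {x : Finset (Fin (n + 3)) →₀ K}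
    (hx : x ∈ degSub K (indepCx (pathGraph (n + 3))) c) :
    desuspChain K (bdry K x) = bdry K (desuspChain K x) :=
  LinearMap.eqOn_span' (f := desuspChain K ∘ₗ bdry K) (g := bdry K ∘ₗ desuspChain K)
    (by rintro _ ⟨F, hF, -, rfl⟩; exact desuspChain_bdry_single K hF) hx

lemma suspHomotopy_spec {c : ℕ} {x : Finset (Fin (n + 3)) →₀ K}
    (hx : x ∈ degSub K (indepCx (pathGraph (n + 3))) c) :
    bdry K (suspHomotopy K x) + suspHomotopy K (bdry K x) = x - suspChain K (desuspChain K x) :=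
  LinearMap.eqOn_span'
    (f := bdry K ∘ₗ suspHomotopy K + suspHomotopy K ∘ₗ bdry K)
    (g := LinearMap.id - suspChain K ∘ₗ desuspChain K)
    (by rintro _ ⟨F, hF, -, rfl⟩; exact suspHomotopy_spec_single K hF) hx

lemma finrank_quotMod_eq_of_inverse {M M' : Type} [AddCommGroup M] [Module K M]
    [AddCommGroup M'] [Module K M'] {A B : Submodule K M} {A' B' : Submodule K M'}
    (f : M →ₗ[K] M') (g : M' →ₗ[K] M) (hfA : A ≤ A'.comap f) (hfB : B ≤ B'.comap f)
    (hgA : A' ≤ A.comap g) (hgB : B' ≤ B.comap g)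
    (hgf : ∀ x ∈ A, g (f x) - x ∈ B) (hfg : ∀ x ∈ A', f (g x) - x ∈ B') :
    Module.finrank K (quotMod K A B) = Module.finrank K (quotMod K A' B') := by
  let F := Submodule.mapQ (Submodule.comap A.subtype B) (Submodule.comap A'.subtype B')
    (f.restrict hfA) fun x hx => hfB hx
  let G := Submodule.mapQ (Submodule.comap A'.subtype B') (Submodule.comap A.subtype B)
    (g.restrict hgA) fun x hx => hgB hx
  refine LinearEquiv.finrank_eq (LinearEquiv.ofLinearMap F G ?_ ?_)
  · exact Submodule.linearMap_qext _ (LinearMap.ext fun x => (Submodule.Quotient.eq _).2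
      (hfg x x.2))
  · exact Submodule.linearMap_qext _ (LinearMap.ext fun x => (Submodule.Quotient.eq _).2
      (hgf x x.2))

theorem finrank_homologyLevel_pathGraph_add_three (c : ℕ) :
    Module.finrank K (homologyLevel K (indepCx (pathGraph (n + 3))) (c + 1)) =
      Module.finrank K (homologyLevel K (indepCx (pathGraph n)) c) := by
  have hσ (x : Finset (Fin n) →₀ K) : bdry K (suspChain K x) = suspChain K (bdry K x) :=
    LinearMap.congr_fun (bdry_comp_suspChain K) x
  symm
  refine finrank_quotMod_eq_of_inverse K (suspChain K) (desuspChain K) ?_ ?_ ?_ ?_ ?_ ?_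
  · rintro x ⟨hx, hx₀⟩
    exact ⟨suspChain_mem_degSub K hx, by rw [SetLike.mem_coe, LinearMap.mem_ker, hσ,
      LinearMap.mem_ker.1 hx₀, map_zero]⟩
  · rintro _ ⟨y, hy, rfl⟩
    exact ⟨suspChain K y, suspChain_mem_degSub K hy, hσ y⟩
  · rintro x ⟨hx, hx₀⟩
    exact ⟨desuspChain_mem_degSub K hx, by rw [SetLike.mem_coe, LinearMap.mem_ker,
      ← desuspChain_bdry_of_mem_degSub K hx, LinearMap.mem_ker.1 hx₀, map_zero]⟩
  · rintro _ ⟨y, hy, rfl⟩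
    exact ⟨desuspChain K y, desuspChain_mem_degSub K hy,
      (desuspChain_bdry_of_mem_degSub K hy).symm⟩
  · intro x _
    rw [← LinearMap.comp_apply, desuspChain_comp_suspChain, LinearMap.id_apply, sub_self]
    exact zero_mem _
  · rintro x ⟨hx, hx₀⟩
    have hhom := suspHomotopy_spec K hx
    rw [LinearMap.mem_ker.1 hx₀, map_zero, add_zero] at hhom
    refine ⟨-suspHomotopy K x, neg_mem (suspHomotopy_mem_degSub K hx), ?_⟩
    rw [map_neg, hhom, neg_sub]

lemma degSub_eq_bot {Δ : Finset (Finset (Fin n))} {c : ℕ} (h : ∀ s ∈ Δ, s.card ≠ c) :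
    degSub K Δ c = ⊥ :=
  Submodule.span_eq_bot.2 fun _ ⟨s, hs, hc, _⟩ => absurd hc (h s hs)

lemma degSub_zero {Δ : Finset (Finset (Fin n))} (h : ∅ ∈ Δ) :
    degSub K Δ 0 = K ∙ Finsupp.single ∅ 1 := by
  unfold degSub
  congr 1
  ext x
  simp only [card_eq_zero, Set.mem_ofPred_eq, Set.mem_singleton_iff]
  constructor
  · rintro ⟨s, -, rfl, rfl⟩
    rfl
  · rintro rfl
    exact ⟨∅, h, rfl, rfl⟩

lemma finrank_homologyLevel_eq_one {Δ : Finset (Finset (Fin n))} {c : ℕ}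
    {z : Finset (Fin n) →₀ K} (hB : degSub K Δ (c + 1) = ⊥)
    (hZ : degSub K Δ c ⊓ LinearMap.ker (bdry K) = K ∙ z) (hz : z ≠ 0) :
    Module.finrank K (homologyLevel K Δ c) = 1 := by
  have h : Submodule.comap (degSub K Δ c ⊓ LinearMap.ker (bdry K)).subtype
      (Submodule.map (bdry K) (degSub K Δ (c + 1))) = ⊥ := by
    rw [hB, Submodule.map_bot, Submodule.comap_bot, Submodule.ker_subtype]
  exact (Submodule.quotEquivOfEqBot _ h).finrank_eq.trans (by rw [hZ, finrank_span_singleton hz])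

lemma finrank_homologyLevel_pathGraph_zero :
    Module.finrank K (homologyLevel K (indepCx (pathGraph 0)) 0) = 1 := by
  have hempty : (∅ : Finset (Fin 0)) ∈ indepCx (pathGraph 0) := by simp [mem_indepCx]
  refine finrank_homologyLevel_eq_one K (z := Finsupp.single ∅ 1)
    (degSub_eq_bot K fun s _ => ?_) ?_ (Finsupp.single_ne_zero.2 one_ne_zero)
  · simp [eq_empty_of_isEmpty s]
  · rw [degSub_zero K hempty, inf_eq_left, Submodule.span_singleton_le_iff_mem,
      LinearMap.mem_ker, bdry_single, sum_empty]

lemma finrank_homologyLevel_pathGraph_two :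
    Module.finrank K (homologyLevel K (indepCx (pathGraph 2)) 1) = 1 := by
  set e₀ : Finset (Fin 2) →₀ K := Finsupp.single {0} 1
  set e₁ : Finset (Fin 2) →₀ K := Finsupp.single {1} 1
  have hbdry₀ : bdry K e₀ = Finsupp.single ∅ 1 := by simp [e₀, bdry_single]
  have hbdry₁ : bdry K e₁ = Finsupp.single ∅ 1 := by
    simp [e₁, bdry_single, filter_singleton]
  have hdeg : degSub K (indepCx (pathGraph 2)) 1 = Submodule.span K {e₀, e₁} := by
    unfold degSub
    congr 1
    ext x
    simp only [card_eq_one, Set.mem_ofPred_eq, Set.mem_insert_iff, Set.mem_singleton_iff]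
    constructor
    · rintro ⟨s, -, ⟨a, rfl⟩, rfl⟩
      fin_cases a
      exacts [Or.inl rfl, Or.inr rfl]
    · rintro (rfl | rfl)
      exacts [⟨{0}, by simp [mem_indepCx], ⟨0, rfl⟩, rfl⟩,
        ⟨{1}, by simp [mem_indepCx], ⟨1, rfl⟩, rfl⟩]
  refine finrank_homologyLevel_eq_one K (z := e₀ - e₁) (degSub_eq_bot K fun s hs hc => ?_) ?_ ?_
  · rw [eq_univ_of_card s (by simpa using hc), mem_indepCx] at hs
    exact hs 0 (mem_univ _) 1 (mem_univ _) (by simp [pathGraph_adj])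
  · ext x
    rw [Submodule.mem_inf, hdeg, Submodule.mem_span_pair, Submodule.mem_span_singleton,
      LinearMap.mem_ker]
    constructor
    · rintro ⟨⟨a, b, rfl⟩, hx⟩
      rw [map_add, map_smul, map_smul, hbdry₀, hbdry₁, ← add_smul, smul_eq_zero] at hx
      have hb : b = -a := by simpa [add_eq_zero_iff_eq_neg'] using hx
      exact ⟨a, by rw [hb, smul_sub, neg_smul, sub_eq_add_neg]⟩
    · rintro ⟨a, rfl⟩
      refine ⟨⟨a, -a, by rw [smul_sub, neg_smul, sub_eq_add_neg]⟩, ?_⟩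
      rw [map_smul, map_sub, hbdry₀, hbdry₁, sub_self, smul_zero]
  · intro h
    have := DFunLike.congr_fun h {0}
    simp [e₀, e₁] at this

lemma finrank_homologyLevel_pathGraph_three_mul (j : ℕ) :
    Module.finrank K (homologyLevel K (indepCx (pathGraph (3 * j))) j) = 1 := by
  induction j with
  | zero => exact finrank_homologyLevel_pathGraph_zero K
  | succ j ih => rwa [mul_add_one, finrank_homologyLevel_pathGraph_add_three]

lemma finrank_homologyLevel_pathGraph_three_mul_add_two (j : ℕ) :
    Module.finrank K (homologyLevel K (indepCx (pathGraph (3 * j + 2))) (j + 1)) = 1 := by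
  induction j with
  | zero => exact finrank_homologyLevel_pathGraph_two K
  | succ j ih =>
    rwa [show 3 * (j + 1) + 2 = 3 * j + 2 + 3 by ring, finrank_homologyLevel_pathGraph_add_three]

lemma coverBetti_self (G : SimpleGraph (Fin n)) (i : ℕ) :
    coverBetti K G i n = Module.finrank K (homologyLevel K (indepCx G) i) := by
  have hfaces : (indepCx G).filter (fun F => F.card + n = n) = {∅} := by
    ext F
    simp only [mem_filter, mem_singleton, Nat.add_eq_right, card_eq_zero, and_iff_right_iff_imp]
    rintro rfl
    simp [mem_indepCx]
  have hlink : linkCx (indepCx G) ∅ = indepCx G := by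
    ext s
    simp [linkCx, indepCx]
  rw [coverBetti, hfaces, sum_singleton, hlink]

/-- `dim_K H̃_{k-1}(Δ_{3k}; K) = 1` and `dim_K H̃_{k-1}(Δ_{3k-1}; K) = 1` for the clique
complexes of complements of paths; consequently
`β_{k,3k}(J(P_{3k})) = 1 = β_{k,3k-1}(J(P_{3k-1}))`. -/
theorem path_compl_reducedHomology_dim (k : ℕ) (hk : 1 ≤ k) :
    Module.finrank K (reducedHomology K (indepCx (pathGraph (3 * k))) (k - 1)) = 1 ∧
      Module.finrank K (reducedHomology K (indepCx (pathGraph (3 * k - 1))) (k - 1)) = 1 ∧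
      coverBetti K (pathGraph (3 * k)) k (3 * k) = 1 ∧
      coverBetti K (pathGraph (3 * k - 1)) k (3 * k - 1) = 1 := by
  obtain ⟨j, rfl⟩ : ∃ j, k = j + 1 := ⟨k - 1, by omega⟩
  rw [show 3 * (j + 1) - 1 = 3 * j + 2 by omega, coverBetti_self, coverBetti_self,
    Nat.add_sub_cancel]
  unfold reducedHomology
  exact ⟨finrank_homologyLevel_pathGraph_three_mul K (j + 1),
    finrank_homologyLevel_pathGraph_three_mul_add_two K j,
    finrank_homologyLevel_pathGraph_three_mul K (j + 1),
    finrank_homologyLevel_pathGraph_three_mul_add_two K j⟩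
end
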